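/- arXiv:2301.13087 — 8 statements merged into one kernel-verified Lean document; each statement's English description precedes it below -/
import Mathlib

section
/- Let X₁, …, X_N be i.i.d. real random variables supported on [0, B] with B > 0. Then with probability at least 1 − δ, the sum ∑_{i=1}^N X_i ≤ 2·∑_{i=1}^N E[X_i] + B·log(1/δ). -/
/-!
On `[0, 1]` the exponential lies below the line `1 + 2x`, so a variable `X` with values in
`[0, B]` has `E[exp (X / B)] ≤ 1 + 2 E[X] / B ≤ exp (2 E[X] / B)`. By independence the moment
generating function of the sum at `1 / B` is at most `exp (2 ∑ E[Xᵢ] / B)`, and the Chernoff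
bound at `t = 1 / B` turns this into the tail estimate with deviation `B log (1 / δ)`.
-/

open MeasureTheory ProbabilityTheory Real

lemma Real.exp_le_one_add_two_mul {x : ℝ} (h0 : 0 ≤ x) (h1 : x ≤ 1) :
    exp x ≤ 1 + 2 * x := by
  have h := abs_exp_sub_one_le (abs_le.2 ⟨by linarith, h1⟩)
  rw [abs_of_nonneg h0] at h
  linarith [le_abs_self (exp x - 1)]

section

variable {Ω : Type*} [MeasurableSpace Ω] {P : Measure Ω} [IsProbabilityMeasure P]

lemma mgf_le_exp_two_mul_integral {X : Ω → ℝ} {B t : ℝ} (hX : AEMeasurable X P)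
    (hsupp : ∀ᵐ ω ∂P, X ω ∈ Set.Icc 0 B) (ht : 0 ≤ t) (htB : t * B ≤ 1) :
    mgf X P t ≤ exp (2 * t * P[X]) := by
  have hint : Integrable X P := .of_mem_Icc 0 B hX hsupp
  calc mgf X P t ≤ ∫ ω, (1 + 2 * t * X ω) ∂P := by
        refine integral_mono_of_nonneg (ae_of_all _ fun ω => (exp_pos _).le)
          ((integrable_const 1).add (hint.const_mul (2 * t))) ?_
        filter_upwards [hsupp] with ω hω
        have h := exp_le_one_add_two_mul (mul_nonneg ht hω.1)
          ((mul_le_mul_of_nonneg_left hω.2 ht).trans htB)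
        linarith
    _ = 1 + 2 * t * P[X] := by
        rw [integral_add (integrable_const 1) (hint.const_mul (2 * t)), integral_const,
          integral_const_mul]
        simp
    _ ≤ exp (2 * t * P[X]) := by linarith [add_one_le_exp (2 * t * P[X])]

lemma ofReal_one_sub_le_measure_le_of_mgf_le {S : Ω → ℝ} {t m δ : ℝ} (ht : 0 < t)
    (hδ : 0 < δ) (hint : Integrable (fun ω => exp (t * S ω)) P)
    (hmgf : mgf S P t ≤ exp (t * m)) :
    ENNReal.ofReal (1 - δ) ≤ P {ω | S ω ≤ m + log (1 / δ) / t} := by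
  set c := m + log (1 / δ) / t with hc
  have htail : P.real {ω | c ≤ S ω} ≤ δ :=
    calc P.real {ω | c ≤ S ω} ≤ exp (-t * c) * mgf S P t :=
        measure_ge_le_exp_mul_mgf c ht.le hint
      _ ≤ exp (-t * c) * exp (t * m) := by gcongr
      _ = δ := by
          rw [← exp_add, show -t * c + t * m = -log (1 / δ) by rw [hc]; field_simp; ring,
            one_div, log_inv, neg_neg, exp_log hδ]
  have htail' : P {ω | c ≤ S ω} ≤ ENNReal.ofReal δ :=
    (ENNReal.le_ofReal_iff_toReal_le (measure_ne_top P _) hδ.le).2 htail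
  have hcover : 1 ≤ P {ω | S ω ≤ c} + P {ω | c ≤ S ω} :=
    calc 1 = P (Set.univ : Set Ω) := measure_univ.symm
      _ ≤ P ({ω | S ω ≤ c} ∪ {ω | c ≤ S ω}) :=
          measure_mono fun ω _ => le_total (S ω) c
      _ ≤ _ := measure_union_le _ _
  calc ENNReal.ofReal (1 - δ) = 1 - ENNReal.ofReal δ := by
        rw [ENNReal.ofReal_sub 1 hδ.le, ENNReal.ofReal_one]
    _ ≤ 1 - P {ω | c ≤ S ω} := tsub_le_tsub_left htail' 1
    _ ≤ P {ω | S ω ≤ c} := tsub_le_iff_right.2 hcover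
end

theorem stmt_1_general {Ω : Type*} [MeasurableSpace Ω] (P : Measure Ω) [IsProbabilityMeasure P]
    (N : ℕ) (B δ : ℝ) (hB : 0 < B) (hδ : δ ∈ Set.Ioo (0 : ℝ) 1)
    (X : Fin N → Ω → ℝ) (hmeas : ∀ i, Measurable (X i))
    (hindep : iIndepFun X P)
    (hsupp : ∀ i, ∀ᵐ ω ∂P, X i ω ∈ Set.Icc (0 : ℝ) B) :
    ENNReal.ofReal (1 - δ) ≤
      P {ω | ∑ i, X i ω ≤ 2 * ∑ i, (∫ ω', X i ω' ∂P) + B * Real.log (1 / δ)} := by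
  have hmgf_le i : mgf (X i) P B⁻¹ ≤ exp (2 * B⁻¹ * P[X i]) :=
    mgf_le_exp_two_mul_integral (hmeas i).aemeasurable (hsupp i) (by positivity)
      (inv_mul_cancel₀ hB.ne').le
  have hmgf_sum : mgf (∑ i, X i) P B⁻¹ ≤ exp (B⁻¹ * (2 * ∑ i, P[X i])) := by
    rw [hindep.mgf_sum hmeas, Finset.mul_sum, Finset.mul_sum, exp_sum]
    refine Finset.prod_le_prod (fun i _ => mgf_nonneg) fun i _ => ?_
    exact (hmgf_le i).trans_eq (by ring_nf)
  have hint := hindep.integrable_exp_mul_sum (t := B⁻¹) (s := Finset.univ) hmeas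
    fun i _ => integrable_exp_mul_of_mem_Icc (hmeas i).aemeasurable (hsupp i)
  convert ofReal_one_sub_le_measure_le_of_mgf_le (inv_pos.2 hB) hδ.1 hint hmgf_sum
    using 4 with ω
  simp only [Finset.sum_apply, div_inv_eq_mul, mul_comm B]

/-- For `N` i.i.d. random variables supported on `[0, B]` with `B > 0` and `δ ∈ (0,1)`,
with probability at least `1 - δ` we have `∑ Xᵢ ≤ 2 ∑ E[Xᵢ] + B log (1/δ)`. -/
theorem stmt_1 {Ω : Type*} [MeasurableSpace Ω] (P : Measure Ω) [IsProbabilityMeasure P]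
    (N : ℕ) (B δ : ℝ) (hB : 0 < B) (hδ : δ ∈ Set.Ioo (0 : ℝ) 1)
    (X : Fin N → Ω → ℝ) (hmeas : ∀ i, Measurable (X i))
    (hindep : iIndepFun X P)
    (hident : ∀ i j, IdentDistrib (X i) (X j) P P)
    (hsupp : ∀ i, ∀ᵐ ω ∂P, X i ω ∈ Set.Icc (0 : ℝ) B) :
    ENNReal.ofReal (1 - δ) ≤
      P {ω | ∑ i, X i ω ≤ 2 * ∑ i, (∫ ω', X i ω' ∂P) + B * Real.log (1 / δ)} :=
  stmt_1_general P N B δ hB hδ X hmeas hindep hsupp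
end

section
/- Let φ₁, …, φ_N ∈ ℝ^d with ‖φᵢ‖ ≤ 1, λ ≥ 1, and define Λᵢ = λI + ∑_{t<i} φₜφₜᵀ. Then ∑_{i=1}^N ‖φᵢ‖²_{Λᵢ⁻¹} ≤ 2d·log(1 + N/(dλ)), where ‖φ‖²_M = φᵀMφ. -/
open Matrix Finset

/-!
By the matrix determinant lemma, `det Λᵢ₊₁ = det Λᵢ · (1 + xᵢ)` with `xᵢ = ‖φᵢ‖²_{Λᵢ⁻¹}`, so
`∑ log (1 + xᵢ) = log det Λ_N - d log λ`. Since `Λᵢ ≥ λ I ≥ I` we have `xᵢ ≤ 1`, hence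
`xᵢ ≤ 2 log (1 + xᵢ)`; and AM-GM on the eigenvalues gives
`det Λ_N ≤ (tr Λ_N / d)^d ≤ (λ + N / d)^d`.
-/

theorem Real.prod_le_sum_div_card_pow {ι : Type*} (s : Finset ι) (z : ι → ℝ)
    (hz : ∀ i ∈ s, 0 ≤ z i) : ∏ i ∈ s, z i ≤ ((∑ i ∈ s, z i) / #s) ^ #s := by
  rcases s.eq_empty_or_nonempty with rfl | hs
  · simp
  have hcard : (#s : ℝ) ≠ 0 := by positivity
  have amgm := Real.geom_mean_le_arith_mean_weighted s (fun _ ↦ (#s : ℝ)⁻¹) z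
    (fun _ _ ↦ by positivity) (by simp [hcard]) hz
  calc ∏ i ∈ s, z i = (∏ i ∈ s, z i ^ (#s : ℝ)⁻¹) ^ #s := by
        rw [← prod_pow]
        refine prod_congr rfl fun i hi ↦ ?_
        rw [← Real.rpow_natCast, ← Real.rpow_mul (hz i hi), inv_mul_cancel₀ hcard, Real.rpow_one]
    _ ≤ ((∑ i ∈ s, z i) / #s) ^ #s := by
        rw [div_eq_inv_mul, mul_sum]
        exact pow_le_pow_left₀ (prod_nonneg fun i hi ↦ Real.rpow_nonneg (hz i hi) _) amgm _

theorem Real.le_two_mul_log_one_add {x : ℝ} (h0 : 0 ≤ x) (h1 : x ≤ 1) :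
    x ≤ 2 * Real.log (1 + x) := by
  have hlog := Real.one_sub_inv_le_log_of_pos (x := 1 + x) (by linarith)
  have hinv : (1 + x)⁻¹ ≤ 1 - x / 2 := by
    rw [inv_le_iff_one_le_mul₀ (by linarith)]
    nlinarith
  linarith

variable {n : Type*} [DecidableEq n]

namespace Matrix

theorem posDef_of_posSemidef_sub_smul_one {M : Matrix n n ℝ} {lam : ℝ} (hlam : 0 < lam)
    (hM : (M - lam • 1).PosSemidef) : M.PosDef := by
  simpa using (PosDef.one.smul hlam).add_posSemidef hM

variable [Fintype n]

theorem PosSemidef.det_le_trace_div_card_pow {A : Matrix n n ℝ} (hA : A.PosSemidef) :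
    A.det ≤ (A.trace / Fintype.card n) ^ Fintype.card n := by
  rw [hA.isHermitian.det_eq_prod_eigenvalues, hA.isHermitian.trace_eq_sum_eigenvalues]
  simpa using Real.prod_le_sum_div_card_pow univ _ fun i _ ↦ hA.eigenvalues_nonneg i

theorem det_add_vecMulVec {α : Type*} [CommRing α] {A : Matrix n n α} (hA : IsUnit A.det)
    (u v : n → α) : (A + vecMulVec u v).det = A.det * (1 + v ⬝ᵥ A⁻¹ *ᵥ u) := by
  rw [vecMulVec_eq Unit, det_add_replicateCol_mul_replicateRow hA, det_unique (1 + _),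
    dotProduct_mulVec]
  simp [Matrix.mul_apply, replicateRow, replicateCol, dotProduct, vecMul]

theorem dotProduct_inv_mulVec_le {M : Matrix n n ℝ} {lam : ℝ} (hlam : 0 < lam)
    (hM : (M - lam • 1).PosSemidef) (u : n → ℝ) :
    u ⬝ᵥ M⁻¹ *ᵥ u ≤ (u ⬝ᵥ u) / lam := by
  have hunit := (posDef_of_posSemidef_sub_smul_one hlam hM).det_pos.ne'.isUnit
  set y := M⁻¹ *ᵥ u
  have hMy : M *ᵥ y = u := by rw [mulVec_mulVec, mul_nonsing_inv _ hunit, one_mulVec]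
  have hlow : lam * (y ⬝ᵥ y) ≤ u ⬝ᵥ y := by
    have := hM.dotProduct_mulVec_nonneg y
    rw [sub_mulVec, hMy, smul_mulVec, one_mulVec, star_trivial, dotProduct_sub,
      dotProduct_smul, dotProduct_comm, smul_eq_mul] at this
    linarith
  have hyy : 0 ≤ y ⬝ᵥ y := by simpa using dotProduct_star_self_nonneg y
  have huu : 0 ≤ u ⬝ᵥ u := by simpa using dotProduct_star_self_nonneg u
  have hcs : (u ⬝ᵥ y) ^ 2 ≤ (u ⬝ᵥ u) * (y ⬝ᵥ y) := by
    simpa only [dotProduct, sq] using sum_mul_sq_le_sq_mul_sq univ u y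
  have key : (u ⬝ᵥ y) * (lam * (u ⬝ᵥ y)) ≤ (u ⬝ᵥ y) * (u ⬝ᵥ u) := by
    nlinarith [mul_le_mul_of_nonneg_left hlow huu]
  rw [le_div_iff₀ hlam, mul_comm]
  rcases (le_trans (mul_nonneg hlam.le hyy) hlow).eq_or_lt with hx | hx
  · rwa [← hx, mul_zero]
  · exact le_of_mul_le_mul_left key hx

end Matrix

section regularizedGram

variable {ι : Type*} {lam : ℝ} {φ : ι → n → ℝ}

def regularizedGram (lam : ℝ) (φ : ι → n → ℝ) (s : Finset ι) : Matrix n n ℝ :=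
  lam • 1 + ∑ t ∈ s, vecMulVec (φ t) (φ t)

theorem regularizedGram_insert [DecidableEq ι] {a : ι} {s : Finset ι} (ha : a ∉ s) :
    regularizedGram lam φ (insert a s) = regularizedGram lam φ s + vecMulVec (φ a) (φ a) := by
  rw [regularizedGram, regularizedGram, sum_insert ha]
  abel

variable [Fintype n]

theorem regularizedGram_sub_smul_one_posSemidef (s : Finset ι) :
    (regularizedGram lam φ s - lam • 1).PosSemidef := by
  rw [regularizedGram, add_sub_cancel_left]
  exact posSemidef_sum s fun t _ ↦ by simpa using posSemidef_vecMulVec_self_star (φ t)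

theorem regularizedGram_posDef (hlam : 0 < lam) (s : Finset ι) :
    (regularizedGram lam φ s).PosDef :=
  posDef_of_posSemidef_sub_smul_one hlam (regularizedGram_sub_smul_one_posSemidef s)

theorem trace_regularizedGram (s : Finset ι) :
    (regularizedGram lam φ s).trace = lam * Fintype.card n + ∑ t ∈ s, φ t ⬝ᵥ φ t := by
  simp [regularizedGram, trace_sum, trace_vecMulVec]

theorem det_regularizedGram_eq_prod [LinearOrder ι] (hlam : 0 < lam) (s : Finset ι) :
    (regularizedGram lam φ s).det = lam ^ Fintype.card n *
      ∏ i ∈ s, (1 + φ i ⬝ᵥ (regularizedGram lam φ {t ∈ s | t < i})⁻¹ *ᵥ φ i) := by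
  induction s using Finset.induction_on_max with
  | empty => simp [regularizedGram]
  | insert a s ha ih =>
    have ha' : a ∉ s := fun h ↦ lt_irrefl a (ha a h)
    have hprefix : ∀ i ∈ s, {t ∈ insert a s | t < i} = {t ∈ s | t < i} := fun i hi ↦ by
      rw [filter_insert, if_neg (ha i hi).not_gt]
    rw [regularizedGram_insert ha',
      det_add_vecMulVec (regularizedGram_posDef hlam s).det_pos.ne'.isUnit, ih,
      prod_insert ha', filter_insert, if_neg (lt_irrefl a), filter_true_of_mem ha]
    simp +contextual only [hprefix]
    ring

theorem det_regularizedGram_le (hlam : 0 < lam) {s : Finset ι}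
    (hφ : ∀ t ∈ s, φ t ⬝ᵥ φ t ≤ 1) :
    (regularizedGram lam φ s).det ≤ (lam + #s / Fintype.card n) ^ Fintype.card n := by
  have hpsd := (regularizedGram_posDef (φ := φ) hlam s).posSemidef
  rcases (Fintype.card n).eq_zero_or_pos with hn | hn
  · simpa [hn] using hpsd.det_le_trace_div_card_pow
  refine hpsd.det_le_trace_div_card_pow.trans (pow_le_pow_left₀
    (div_nonneg hpsd.trace_nonneg (Nat.cast_nonneg _)) ?_ _)
  rw [trace_regularizedGram, add_div, mul_div_cancel_right₀ _ (by positivity)]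
  gcongr
  simpa using sum_le_sum hφ

theorem sum_dotProduct_inv_regularizedGram_mulVec_le [LinearOrder ι] (hlam : 1 ≤ lam)
    (s : Finset ι) (hφ : ∀ t ∈ s, φ t ⬝ᵥ φ t ≤ 1) :
    ∑ i ∈ s, φ i ⬝ᵥ (regularizedGram lam φ {t ∈ s | t < i})⁻¹ *ᵥ φ i ≤
      2 * Fintype.card n * Real.log (1 + #s / (Fintype.card n * lam)) := by
  have hlam0 : 0 < lam := by linarith
  set x := fun i ↦ φ i ⬝ᵥ (regularizedGram lam φ {t ∈ s | t < i})⁻¹ *ᵥ φ i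
  have hx0 : ∀ i, 0 ≤ x i := fun i ↦ by
    simpa using (regularizedGram_posDef hlam0 _).inv.posSemidef.dotProduct_mulVec_nonneg (φ i)
  have hx1 : ∀ i ∈ s, x i ≤ 1 := fun i hi ↦
    (dotProduct_inv_mulVec_le hlam0 (regularizedGram_sub_smul_one_posSemidef _) (φ i)).trans
      ((div_le_one hlam0).2 ((hφ i hi).trans hlam))
  have hlogdet : Real.log (regularizedGram lam φ s).det =
      Fintype.card n * Real.log lam + ∑ i ∈ s, Real.log (1 + x i) := by
    have hpos : ∀ i, 0 < 1 + x i := fun i ↦ by linarith [hx0 i]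
    rw [det_regularizedGram_eq_prod hlam0,
      Real.log_mul (by positivity) (prod_pos fun i _ ↦ hpos i).ne', Real.log_pow,
      Real.log_prod fun i _ ↦ (hpos i).ne']
  have hdet : Real.log (regularizedGram lam φ s).det ≤
      Fintype.card n * Real.log (lam + #s / Fintype.card n) := by
    rw [← Real.log_pow]
    exact Real.log_le_log (regularizedGram_posDef hlam0 s).det_pos
      (det_regularizedGram_le hlam0 hφ)
  calc ∑ i ∈ s, x i ≤ ∑ i ∈ s, 2 * Real.log (1 + x i) :=
        sum_le_sum fun i hi ↦ Real.le_two_mul_log_one_add (hx0 i) (hx1 i hi)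
    _ = 2 * (Real.log (regularizedGram lam φ s).det - Fintype.card n * Real.log lam) := by
        rw [← mul_sum, hlogdet]; ring
    _ ≤ 2 * (Fintype.card n * Real.log (lam + #s / Fintype.card n) -
          Fintype.card n * Real.log lam) := by gcongr
    _ = 2 * Fintype.card n * Real.log (1 + #s / (Fintype.card n * lam)) := by
        rw [← mul_sub, ← Real.log_div (by positivity) hlam0.ne', add_div, div_self hlam0.ne',
          div_div]
        ring

end regularizedGram

/-- Elliptical potential lemma: for vectors `φᵢ ∈ ℝ^d` of Euclidean norm at most 1,
`λ ≥ 1`, and `Λᵢ = λ I + ∑_{t < i} φₜ φₜᵀ`, we have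
`∑ᵢ ‖φᵢ‖²_{Λᵢ⁻¹} ≤ 2 d log (1 + N / (d λ))`. -/
theorem stmt_3 (d N : ℕ) (lam : ℝ) (hlam : 1 ≤ lam)
    (φ : Fin N → Fin d → ℝ) (hφ : ∀ i, ∑ j, (φ i j) ^ 2 ≤ 1)
    (Λ : Fin N → Matrix (Fin d) (Fin d) ℝ)
    (hΛ : ∀ i, Λ i = lam • (1 : Matrix (Fin d) (Fin d) ℝ) +
      ∑ t ∈ Finset.univ.filter (fun t => t < i), vecMulVec (φ t) (φ t)) :
    ∑ i, φ i ⬝ᵥ ((Λ i)⁻¹ *ᵥ φ i) ≤ 2 * d * Real.log (1 + N / (d * lam)) := by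
  have hΛ' : Λ = fun i ↦ regularizedGram lam φ {t ∈ univ | t < i} := funext hΛ
  subst hΛ'
  have hnorm : ∀ t ∈ univ, φ t ⬝ᵥ φ t ≤ 1 := fun t _ ↦ by simpa [dotProduct, sq] using hφ t
  simpa only [card_univ, Fintype.card_fin] using
    sum_dotProduct_inv_regularizedGram_mulVec_le hlam univ hnorm
end

section
/- Let {φᵢ}ᵢ₌₁ⁿ ⊂ ℝ^d, {yᵢ}ᵢ₌₁ⁿ ⊂ ℝ, λ > 0, Λ = ∑ᵢ φᵢφᵢᵀ + λI, and ŵ = Λ⁻¹ ∑ᵢ φᵢyᵢ. Then for any w* ∈ ℝ^d: ‖ŵ − w*‖_Λ ≤ ‖∑ᵢ φᵢ(yᵢ − φᵢᵀw*)‖_{Λ⁻¹} + √λ·‖w*‖. -/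
/-!
Write `ξ = ∑ᵢ φᵢ (yᵢ - φᵢᵀ w*)`. The normal equations give `Λ (ŵ - w*) = ξ - λ w*`, hence
`‖ŵ - w*‖_Λ = ‖ξ - λ w*‖_{Λ⁻¹}`. The triangle inequality for the `Λ⁻¹`-seminorm splits off
`‖ξ‖_{Λ⁻¹}`, and `λ ‖w*‖_{Λ⁻¹} ≤ √λ ‖w*‖` because `Λ ⪰ λ I`.
-/

open Matrix Finset

namespace Matrix

variable {n ι : Type*} [Fintype n]

theorem sum_vecMulVec_self_mulVec {R : Type*} [CommSemiring R] (s : Finset ι) (φ : ι → n → R)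
    (x : n → R) : (∑ i ∈ s, vecMulVec (φ i) (φ i)) *ᵥ x = ∑ i ∈ s, (φ i ⬝ᵥ x) • φ i := by
  simp only [sum_mulVec, vecMulVec_mulVec, op_smul_eq_smul]

theorem posSemidef_sum_vecMulVec_self (s : Finset ι) (φ : ι → n → ℝ) :
    (∑ i ∈ s, vecMulVec (φ i) (φ i)).PosSemidef :=
  posSemidef_sum s fun i _ => posSemidef_vecMulVec_self_star (φ i)

theorem sqrt_dotProduct_mulVec_sub_le {M : Matrix n n ℝ} (hM : M.PosSemidef) (x y : n → ℝ) :
    √((x - y) ⬝ᵥ (M *ᵥ (x - y))) ≤ √(x ⬝ᵥ (M *ᵥ x)) + √(y ⬝ᵥ (M *ᵥ y)) := by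
  have hnorm (z : n → ℝ) :
      @norm _ (M.toSeminormedAddCommGroup hM).toNorm z = √(z ⬝ᵥ (M *ᵥ z)) := by
    rw [dotProduct_comm]
    rfl
  simpa only [hnorm] using @norm_sub_le _ (M.toSeminormedAddCommGroup hM).toSeminormedAddGroup x y

theorem mul_dotProduct_inv_add_smul_one_mulVec_le [DecidableEq n] {A : Matrix n n ℝ}
    (hA : A.PosSemidef) {c : ℝ} (hc : 0 < c) (x : n → ℝ) :
    c * (x ⬝ᵥ ((A + c • 1)⁻¹ *ᵥ x)) ≤ x ⬝ᵥ x := by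
  have := (PosDef.posSemidef_add hA (PosDef.one.smul hc)).isUnit.invertible
  -- With `v = (A + c I)⁻¹ x` the difference of the two sides is `‖A v‖² + c vᵀ A v ≥ 0`.
  set v := (A + c • 1)⁻¹ *ᵥ x
  have hx : A *ᵥ v + c • v = x := by
    have h : (A + c • 1) *ᵥ v = x := by
      rw [mulVec_mulVec, mul_inv_of_invertible, one_mulVec]
    rwa [add_mulVec, smul_mulVec, one_mulVec] at h
  have hAv : 0 ≤ v ⬝ᵥ (A *ᵥ v) := by simpa using hA.dotProduct_mulVec_nonneg v
  have hAA : 0 ≤ (A *ᵥ v) ⬝ᵥ (A *ᵥ v) := by simpa using dotProduct_star_self_nonneg (A *ᵥ v)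
  rw [← hx]
  simp only [dotProduct_add, add_dotProduct, dotProduct_smul, smul_dotProduct, smul_eq_mul,
    dotProduct_comm (A *ᵥ v) v]
  nlinarith

end Matrix

/-- Regularized least squares error decomposition:
`‖ŵ − w*‖_Λ ≤ ‖∑ᵢ φᵢ (yᵢ − φᵢᵀ w*)‖_{Λ⁻¹} + √λ ‖w*‖`. -/
theorem stmt_4 (d n : ℕ) (lam : ℝ) (hlam : 0 < lam)
    (φ : Fin n → Fin d → ℝ) (y : Fin n → ℝ)
    (Λ : Matrix (Fin d) (Fin d) ℝ)
    (hΛ : Λ = (∑ i, vecMulVec (φ i) (φ i)) + lam • (1 : Matrix (Fin d) (Fin d) ℝ))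
    (w : Fin d → ℝ) (hw : w = Λ⁻¹ *ᵥ (∑ i, y i • φ i))
    (wstar : Fin d → ℝ) :
    Real.sqrt ((w - wstar) ⬝ᵥ (Λ *ᵥ (w - wstar))) ≤
      Real.sqrt ((∑ i, (y i - φ i ⬝ᵥ wstar) • φ i) ⬝ᵥ
        (Λ⁻¹ *ᵥ (∑ i, (y i - φ i ⬝ᵥ wstar) • φ i)))
      + Real.sqrt lam * Real.sqrt (∑ j, (wstar j) ^ 2) := by
  have hA := posSemidef_sum_vecMulVec_self univ φ
  have hΛpd : Λ.PosDef := hΛ ▸ PosDef.posSemidef_add hA (PosDef.one.smul hlam)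
  have := hΛpd.isUnit.invertible
  set ξ := ∑ i, (y i - φ i ⬝ᵥ wstar) • φ i
  have hnormal : Λ *ᵥ (w - wstar) = ξ - lam • wstar := by
    rw [mulVec_sub, hw, mulVec_mulVec, mul_inv_of_invertible, one_mulVec, hΛ, add_mulVec,
      sum_vecMulVec_self_mulVec, smul_mulVec, one_mulVec]
    simp only [ξ, sub_smul, sum_sub_distrib]
    abel
  have herr : (w - wstar) ⬝ᵥ (Λ *ᵥ (w - wstar)) =
      (ξ - lam • wstar) ⬝ᵥ (Λ⁻¹ *ᵥ (ξ - lam • wstar)) := by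
    rw [inv_mulVec_eq_vec hnormal.symm, hnormal, dotProduct_comm]
  have hreg : √((lam • wstar) ⬝ᵥ (Λ⁻¹ *ᵥ (lam • wstar))) ≤ √lam * √(∑ j, wstar j ^ 2) := by
    have hinv := mul_dotProduct_inv_add_smul_one_mulVec_le hA hlam wstar
    have hsq : wstar ⬝ᵥ wstar = ∑ j, wstar j ^ 2 := by simp only [dotProduct, sq]
    rw [← hΛ, hsq] at hinv
    rw [← Real.sqrt_mul hlam.le]
    apply Real.sqrt_le_sqrt
    simp only [mulVec_smul, dotProduct_smul, smul_dotProduct, smul_eq_mul]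
    exact mul_le_mul_of_nonneg_left hinv hlam.le
  rw [herr]
  exact (sqrt_dotProduct_mulVec_sub_le hΛpd.inv.posSemidef ξ _).trans (add_le_add_right hreg _)
end

section
/- Let K, τ ∈ ℤ₊ with τ ≤ K, J = ⌈K/τ⌉, and partition [K] into blocks T_j = {τ(j−1)+1, …, τj}. Given g_k ∈ ℝⁿ with η·g_k(a) ≥ −1, define block averages g_{(j)} = (1/τ)∑_{k∈T_j} g_k, the multiplicative-weights iterates x_{(j+1)}(a) ∝ x_{(j)}(a)·e^{−η g_{(j)}(a)} with uniform x_{(1)}, and set x_k = x_{(j)} for k ∈ T_j. Then max_{x∈Δ(n)} ∑_{k=1}^K ⟨g_k, x_k − x⟩ ≤ (τ log n)/η + τ·max_k ‖g_k‖_∞ + η·∑_{k=1}^K ∑_{i=1}^n x_k(i)·g_k(i)². -/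
open Finset

/-!
Inside block `j` the played point is the constant `x_(j)`, so the regret of the rounds of the
block is `τ ⟨g_(j), x_(j) - z⟩`. For the exponential-weights iterates the cross entropy
`Φ_j = -∑ z(a) log x_(j)(a)` drops by at least `η ⟨g_(j), x_(j) - z⟩ - η² ∑ x_(j)(a) g_(j)(a)²`
per step: the log-partition function is controlled by `eˢ ≤ 1 + s + s²` for `s ≤ 1`, which is
where `η g ≥ -1` enters. Since `Φ` starts at `log n` and stays nonnegative, telescoping gives
`τ log n / η + τ η ∑_j ∑_a x_(j)(a) g_(j)(a)²`, and Cauchy–Schwarz over a block,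
`τ g_(j)(a)² ≤ ∑_{k ∈ T_j} g_k(a)²`, turns the last term into `η ∑_k ∑_a x_k(a) g_k(a)²`.
-/

namespace Real

theorem exp_le_one_add_add_sq {y : ℝ} (hy : y ≤ 1) : exp y ≤ 1 + y + y ^ 2 := by
  rcases le_total (-1) y with h | h
  · have := (abs_le.1 (abs_exp_sub_one_sub_id_le (abs_le.2 ⟨h, hy⟩))).2
    linarith
  · nlinarith [exp_le_one_iff.2 (by linarith : y ≤ 0)]

end Real

section ExponentialWeights

variable {ι : Type*} [Fintype ι]

noncomputable def hedgeStep (η : ℝ) (p ℓ : ι → ℝ) : ι → ℝ :=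
  fun a => p a * Real.exp (-η * ℓ a) / ∑ b, p b * Real.exp (-η * ℓ b)

noncomputable def crossEntropy (z p : ι → ℝ) : ℝ := -∑ a, z a * Real.log (p a)

variable {η : ℝ} {p ℓ z : ι → ℝ}

lemma crossEntropy_uniform (hz1 : ∑ a, z a = 1) :
    crossEntropy z (fun _ => 1 / (Fintype.card ι : ℝ)) = Real.log (Fintype.card ι) := by
  simp [crossEntropy, ← sum_mul, hz1]

lemma crossEntropy_nonneg (hz0 : ∀ a, 0 ≤ z a) (hp : ∀ a, 0 < p a) (hp1 : ∑ a, p a = 1) :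
    0 ≤ crossEntropy z p := by
  refine neg_nonneg.2 (sum_nonpos fun a _ => mul_nonpos_of_nonneg_of_nonpos (hz0 a) ?_)
  exact Real.log_nonpos (hp a).le
    (hp1 ▸ single_le_sum (fun b _ => (hp b).le) (mem_univ a))

variable [Nonempty ι]

lemma sum_mul_exp_pos (hp : ∀ a, 0 < p a) : 0 < ∑ a, p a * Real.exp (-η * ℓ a) :=
  sum_pos (fun a _ => mul_pos (hp a) (Real.exp_pos _)) univ_nonempty

lemma hedgeStep_pos (hp : ∀ a, 0 < p a) (a : ι) : 0 < hedgeStep η p ℓ a :=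
  div_pos (mul_pos (hp a) (Real.exp_pos _)) (sum_mul_exp_pos hp)

lemma sum_hedgeStep (hp : ∀ a, 0 < p a) : ∑ a, hedgeStep η p ℓ a = 1 := by
  simp only [hedgeStep]
  rw [← sum_div, div_self (sum_mul_exp_pos hp).ne']

lemma log_sum_mul_exp_le (hp : ∀ a, 0 < p a) (hp1 : ∑ a, p a = 1) (hℓ : ∀ a, -1 ≤ η * ℓ a) :
    Real.log (∑ a, p a * Real.exp (-η * ℓ a))
      ≤ -η * ∑ a, p a * ℓ a + η ^ 2 * ∑ a, p a * ℓ a ^ 2 := by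
  have hD_le : ∑ a, p a * Real.exp (-η * ℓ a)
      ≤ 1 + -η * ∑ a, p a * ℓ a + η ^ 2 * ∑ a, p a * ℓ a ^ 2 :=
    calc ∑ a, p a * Real.exp (-η * ℓ a)
        ≤ ∑ a, p a * (1 + -η * ℓ a + (-η * ℓ a) ^ 2) :=
          sum_le_sum fun a _ => mul_le_mul_of_nonneg_left
            (Real.exp_le_one_add_add_sq (by linarith [hℓ a])) (hp a).le
      _ = ∑ a, p a + -η * ∑ a, p a * ℓ a + η ^ 2 * ∑ a, p a * ℓ a ^ 2 := by
          rw [mul_sum, mul_sum, ← sum_add_distrib, ← sum_add_distrib]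
          exact sum_congr rfl fun a _ => by ring
      _ = _ := by rw [hp1]
  linarith [Real.log_le_sub_one_of_pos (sum_mul_exp_pos (η := η) (ℓ := ℓ) hp)]

lemma crossEntropy_hedgeStep (hp : ∀ a, 0 < p a) (hz1 : ∑ a, z a = 1) :
    crossEntropy z (hedgeStep η p ℓ) = crossEntropy z p + η * ∑ a, z a * ℓ a
      + Real.log (∑ a, p a * Real.exp (-η * ℓ a)) := by
  have hlog : ∀ a, Real.log (hedgeStep η p ℓ a)
      = Real.log (p a) - η * ℓ a - Real.log (∑ b, p b * Real.exp (-η * ℓ b)) := fun a => by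
    rw [hedgeStep, Real.log_div (mul_pos (hp a) (Real.exp_pos _)).ne' (sum_mul_exp_pos hp).ne',
      Real.log_mul (hp a).ne' (Real.exp_pos _).ne', Real.log_exp]
    ring
  simp only [crossEntropy, hlog, mul_sub, sum_sub_distrib, ← sum_mul, hz1, mul_left_comm _ η,
    ← mul_sum]
  ring

lemma mul_inner_sub_le_crossEntropy_sub_hedgeStep (hp : ∀ a, 0 < p a) (hp1 : ∑ a, p a = 1)
    (hz1 : ∑ a, z a = 1) (hℓ : ∀ a, -1 ≤ η * ℓ a) :
    η * ∑ a, ℓ a * (p a - z a) ≤ crossEntropy z p - crossEntropy z (hedgeStep η p ℓ)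
      + η ^ 2 * ∑ a, p a * ℓ a ^ 2 := by
  have hsplit : ∑ a, ℓ a * (p a - z a) = ∑ a, p a * ℓ a - ∑ a, z a * ℓ a := by
    rw [← sum_sub_distrib]
    exact sum_congr rfl fun a _ => by ring
  rw [crossEntropy_hedgeStep hp hz1, hsplit]
  linarith [log_sum_mul_exp_le hp hp1 hℓ]

variable {w L : ℕ → ι → ℝ}

lemma hedge_iterates_pos_and_sum_eq_one (h0 : ∀ a, w 0 a = 1 / Fintype.card ι)
    (hstep : ∀ j, w (j + 1) = hedgeStep η (w j) (L j)) (j : ℕ) :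
    (∀ a, 0 < w j a) ∧ ∑ a, w j a = 1 := by
  induction j with
  | zero =>
    simp only [h0, sum_const, card_univ, nsmul_eq_mul]
    exact ⟨fun _ => by positivity, mul_one_div_cancel (by positivity)⟩
  | succ j ih => exact hstep j ▸ ⟨hedgeStep_pos ih.1, sum_hedgeStep ih.1⟩

theorem hedge_regret_le (hη : 0 < η) (hz : z ∈ stdSimplex ℝ ι)
    (h0 : ∀ a, w 0 a = 1 / Fintype.card ι) (hstep : ∀ j, w (j + 1) = hedgeStep η (w j) (L j))
    (hL : ∀ j a, -1 ≤ η * L j a) (J : ℕ) :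
    ∑ j ∈ range J, ∑ a, L j a * (w j a - z a)
      ≤ Real.log (Fintype.card ι) / η + η * ∑ j ∈ range J, ∑ a, w j a * L j a ^ 2 := by
  have hw := hedge_iterates_pos_and_sum_eq_one h0 hstep
  have hstep_le : ∀ j, η * ∑ a, L j a * (w j a - z a)
      ≤ crossEntropy z (w j) - crossEntropy z (w (j + 1)) + η ^ 2 * ∑ a, w j a * L j a ^ 2 :=
    fun j => hstep j ▸ mul_inner_sub_le_crossEntropy_sub_hedgeStep (hw j).1 (hw j).2 hz.2 (hL j)
  have hinit : crossEntropy z (w 0) = Real.log (Fintype.card ι) := by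
    rw [show w 0 = _ from funext h0, crossEntropy_uniform hz.2]
  have hsum : η * ∑ j ∈ range J, ∑ a, L j a * (w j a - z a)
      ≤ Real.log (Fintype.card ι) + η ^ 2 * ∑ j ∈ range J, ∑ a, w j a * L j a ^ 2 :=
    calc _ ≤ ∑ j ∈ range J, (crossEntropy z (w j) - crossEntropy z (w (j + 1))
            + η ^ 2 * ∑ a, w j a * L j a ^ 2) := by
          rw [mul_sum]; exact sum_le_sum fun j _ => hstep_le j
      _ = crossEntropy z (w 0) - crossEntropy z (w J)
            + η ^ 2 * ∑ j ∈ range J, ∑ a, w j a * L j a ^ 2 := by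
          rw [sum_add_distrib, sum_range_sub' (fun j => crossEntropy z (w j)), mul_sum]
      _ ≤ _ := by
          linarith [crossEntropy_nonneg hz.1 (hw J).1 (hw J).2]
  rw [div_add' _ _ _ hη.ne', le_div_iff₀' hη]
  linarith

end ExponentialWeights

section Blocking

def block (τ K j : ℕ) : Finset ℕ := Ico (τ * j) (min (τ * (j + 1)) K)

variable {τ K : ℕ}

lemma mem_block (hτ : 0 < τ) {j k : ℕ} : k ∈ block τ K j ↔ k < K ∧ k / τ = j := by
  rw [block, mem_Ico, lt_min_iff, Nat.div_eq_iff hτ, mul_comm j τ, Nat.mul_succ]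
  omega

lemma card_block_le (j : ℕ) : (block τ K j).card ≤ τ := by
  rw [block, Nat.card_Ico, Nat.mul_succ]
  omega

-- Blocks with index `j ≥ ⌈K/τ⌉` are empty, so indexing blocks by `j < K` covers every round once.
lemma sum_range_eq_sum_sum_block {M : Type*} [AddCommMonoid M] (hτ : 0 < τ) (F : ℕ → ℕ → M) :
    ∑ k ∈ range K, F k (k / τ) = ∑ j ∈ range K, ∑ k ∈ block τ K j, F k j := by
  rw [← sum_fiberwise_of_maps_to (g := (· / τ)) (t := range K)
    fun k hk => mem_range.2 ((Nat.div_le_self k τ).trans_lt (mem_range.1 hk))]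
  refine sum_congr rfl fun j _ => sum_congr ?_ fun k hk => ?_
  · ext k
    simp [mem_block hτ]
  · rw [(mem_block hτ).1 hk |>.2]

variable {ι : Type*}

noncomputable def blockAvg (τ K : ℕ) (g : ℕ → ι → ℝ) (j : ℕ) (a : ι) : ℝ :=
  1 / τ * ∑ k ∈ block τ K j, g k a

variable {g : ℕ → ι → ℝ}

lemma neg_one_le_mul_blockAvg (hτ : 0 < τ) {c : ℝ} (hg : ∀ k, k < K → ∀ a, -1 ≤ c * g k a)
    (j : ℕ) (a : ι) : -1 ≤ c * blockAvg τ K g j a := by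
  have hτR : (0 : ℝ) < τ := by exact_mod_cast hτ
  have hsum : -(τ : ℝ) ≤ ∑ k ∈ block τ K j, c * g k a :=
    calc -(τ : ℝ) ≤ -((block τ K j).card : ℝ) := neg_le_neg (by exact_mod_cast card_block_le j)
      _ = ∑ k ∈ block τ K j, (-1 : ℝ) := by simp
      _ ≤ _ := sum_le_sum fun k hk => hg k ((mem_block hτ).1 hk).1 a
  rw [blockAvg, mul_left_comm, mul_sum, one_div, le_inv_mul_iff₀ hτR]
  linarith

variable [Fintype ι]

lemma sum_sum_mul_eq_mul_sum_blockAvg (hτ : 0 < τ) (v : ℕ → ι → ℝ) :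
    ∑ k ∈ range K, ∑ i, g k i * v (k / τ) i
      = τ * ∑ j ∈ range K, ∑ i, blockAvg τ K g j i * v j i := by
  have hτR : (τ : ℝ) ≠ 0 := by exact_mod_cast hτ.ne'
  rw [sum_range_eq_sum_sum_block hτ (fun k j => ∑ i, g k i * v j i), mul_sum]
  refine sum_congr rfl fun j _ => ?_
  rw [sum_comm, mul_sum]
  refine sum_congr rfl fun i _ => ?_
  rw [blockAvg, ← sum_mul]
  field_simp

lemma mul_sum_sum_mul_blockAvg_sq_le (hτ : 0 < τ) (w : ℕ → ι → ℝ) (hw : ∀ j i, 0 ≤ w j i) :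
    τ * ∑ j ∈ range K, ∑ i, w j i * blockAvg τ K g j i ^ 2
      ≤ ∑ k ∈ range K, ∑ i, w (k / τ) i * g k i ^ 2 := by
  have hτR : (0 : ℝ) < τ := by exact_mod_cast hτ
  rw [sum_range_eq_sum_sum_block hτ (fun k j => ∑ i, w j i * g k i ^ 2), mul_sum]
  refine sum_le_sum fun j _ => ?_
  rw [sum_comm, mul_sum]
  refine sum_le_sum fun i _ => ?_
  have hcs : (∑ k ∈ block τ K j, g k i) ^ 2 ≤ τ * ∑ k ∈ block τ K j, g k i ^ 2 :=
    sq_sum_le_card_mul_sum_sq.trans (mul_le_mul_of_nonneg_right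
      (by exact_mod_cast card_block_le j) (sum_nonneg fun k _ => sq_nonneg _))
  calc (τ : ℝ) * (w j i * blockAvg τ K g j i ^ 2)
      = w j i * ((∑ k ∈ block τ K j, g k i) ^ 2 / τ) := by
        rw [blockAvg]
        field_simp
    _ ≤ _ := by
        rw [← mul_sum]
        exact mul_le_mul_of_nonneg_left ((div_le_iff₀' hτR).2 hcs) (hw j i)

end Blocking

theorem stmt_6_general (n K τ : ℕ) (hτ : 0 < τ) (hτK : τ ≤ K)
    (η : ℝ) (hη : 0 < η)
    (g : ℕ → Fin n → ℝ) (hg : ∀ k, k < K → ∀ a, -1 ≤ η * g k a)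
    (Gmax : ℝ) (hGmax : ∀ k, k < K → ∀ a, |g k a| ≤ Gmax)
    (gbar : ℕ → Fin n → ℝ)
    (hgbar : ∀ j a, gbar j a = (1 / (τ : ℝ)) * ∑ k ∈ Finset.Ico (τ * j) (min (τ * (j + 1)) K), g k a)
    (xblk : ℕ → Fin n → ℝ)
    (hx0 : ∀ a, xblk 0 a = 1 / n)
    (hxupd : ∀ j a,
      xblk (j + 1) a = xblk j a * Real.exp (-η * gbar j a) /
        ∑ a', xblk j a' * Real.exp (-η * gbar j a'))
    (x : ℕ → Fin n → ℝ) (hx : ∀ k, x k = xblk (k / τ))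
    (z : Fin n → ℝ) (hz0 : ∀ i, 0 ≤ z i) (hz1 : ∑ i, z i = 1) :
    ∑ k ∈ Finset.range K, ∑ i, g k i * (x k i - z i) ≤
      (τ : ℝ) * Real.log n / η + (τ : ℝ) * Gmax
        + η * ∑ k ∈ Finset.range K, ∑ i, x k i * (g k i) ^ 2 := by
  obtain ⟨a₀, -⟩ := univ.nonempty_of_sum_ne_zero (hz1.trans_ne one_ne_zero)
  have : Nonempty (Fin n) := ⟨a₀⟩
  have hgbar_eq : gbar = blockAvg τ K g := funext₂ hgbar
  subst hgbar_eq
  simp only [hx]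
  have h0 : ∀ a, xblk 0 a = 1 / Fintype.card (Fin n) := fun a => by rw [hx0, Fintype.card_fin]
  have hstep : ∀ j, xblk (j + 1) = hedgeStep η (xblk j) (blockAvg τ K g j) :=
    fun j => funext (hxupd j)
  have hw := hedge_iterates_pos_and_sum_eq_one h0 hstep
  have hregret := hedge_regret_le hη ⟨hz0, hz1⟩ h0 hstep (neg_one_le_mul_blockAvg hτ hg) K
  have hsq := mul_sum_sum_mul_blockAvg_sq_le (g := g) (K := K) hτ xblk fun j i => ((hw j).1 i).le
  have hG : 0 ≤ Gmax := (abs_nonneg _).trans (hGmax 0 (by omega) a₀)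
  rw [Fintype.card_fin] at hregret
  calc _ = τ * ∑ j ∈ range K, ∑ i, blockAvg τ K g j i * (xblk j i - z i) :=
        sum_sum_mul_eq_mul_sum_blockAvg hτ fun j i => xblk j i - z i
    _ ≤ τ * (Real.log n / η + η * ∑ j ∈ range K, ∑ i, xblk j i * blockAvg τ K g j i ^ 2) := by
        gcongr
    _ = τ * Real.log n / η + η * (τ * ∑ j ∈ range K, ∑ i, xblk j i * blockAvg τ K g j i ^ 2) := by
        ring
    _ ≤ _ := by
        linarith [mul_le_mul_of_nonneg_left hsq hη.le, mul_nonneg (Nat.cast_nonneg τ) hG]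

/-- Entropy-regularized OMD with blocking: losses are averaged over consecutive blocks of
length `τ` and the exponential-weights iterate is updated once per block; the played point
at round `k` is the iterate of the block containing `k`. Then for every point `z` of the
simplex, `∑_k ⟨g_k, x_k − z⟩ ≤ τ log n / η + τ max_k ‖g_k‖_∞ + η ∑_k ∑_i x_k(i) g_k(i)²`.
(Rounds are indexed `k = 0, …, K-1`; the block of round `k` is `k / τ`.) -/
theorem stmt_6 (n K τ : ℕ) (hn : 0 < n) (hτ : 0 < τ) (hτK : τ ≤ K)
    (η : ℝ) (hη : 0 < η)
    (g : ℕ → Fin n → ℝ) (hg : ∀ k, k < K → ∀ a, -1 ≤ η * g k a)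
    (Gmax : ℝ) (hGmax : ∀ k, k < K → ∀ a, |g k a| ≤ Gmax)
    (gbar : ℕ → Fin n → ℝ)
    (hgbar : ∀ j a, gbar j a = (1 / (τ : ℝ)) * ∑ k ∈ Finset.Ico (τ * j) (min (τ * (j + 1)) K), g k a)
    (xblk : ℕ → Fin n → ℝ)
    (hx0 : ∀ a, xblk 0 a = 1 / n)
    (hxupd : ∀ j a,
      xblk (j + 1) a = xblk j a * Real.exp (-η * gbar j a) /
        ∑ a', xblk j a' * Real.exp (-η * gbar j a'))
    (x : ℕ → Fin n → ℝ) (hx : ∀ k, x k = xblk (k / τ))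
    (z : Fin n → ℝ) (hz0 : ∀ i, 0 ≤ z i) (hz1 : ∑ i, z i = 1) :
    ∑ k ∈ Finset.range K, ∑ i, g k i * (x k i - z i) ≤
      (τ : ℝ) * Real.log n / η + (τ : ℝ) * Gmax
        + η * ∑ k ∈ Finset.range K, ∑ i, x k i * (g k i) ^ 2 :=
  stmt_6_general n K τ hτ hτK η hη g hg Gmax hGmax gbar hgbar xblk hx0 hxupd x hx z hz0 hz1
end

section
/- Let 1/2·I ⪯ Σ̂⁺_m ⪯ (1/γ)·I be i.i.d. random d×d matrices (0 < γ < 1/2) with mean Σ⁺ = E[Σ̂⁺_m], and suppose for a fixed matrix Σ with γI ⪯ Σ ⪯ I that ‖Σ⁺ − Σ⁻¹‖ ≤ ε where 0 < ε < 1/16. Let Σ̂⁺ = (1/M)∑_{m=1}^M Σ̂⁺_m and assume (8d/(γM))·log(3M/γ) < 1/8. Then E[Σ̂⁺ Σ Σ̂⁺] ⪯ 2·E[Σ̂⁺] + (3ε + (12d/(γM))·log(3M/γ))·I. -/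
open MeasureTheory ProbabilityTheory Matrix Finset

instance matrixMeasurableSpace (n : ℕ) : MeasurableSpace (Matrix (Fin n) (Fin n) ℝ) :=
  MeasurableSpace.pi (X := fun _ : Fin n => Fin n → ℝ)

/-!
Expand the square of the average `(1/M) ∑ₘ Aₘ`. By independence each of the `M(M-1)` off-diagonal
terms `E[Aₘ Σ Aₘ']` equals `Σ⁺ Σ Σ⁺`, while each of the `M` diagonal terms is at most `Σ⁺ / γ`,
because `A Σ A ⪯ A² ⪯ A / γ` whenever `0 ⪯ A ⪯ I / γ` and `Σ ⪯ I`. Hence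
`E[Σ̂⁺ Σ Σ̂⁺] ⪯ Σ⁺ Σ Σ⁺ + Σ⁺ / (γM)`, and `γM ≥ 1` by the assumption on `M`. Finally, writing
`Σ⁺ = Σ⁻¹ + E` with `‖E‖ ≤ ε` gives `Σ⁺ Σ Σ⁺ = Σ⁺ + E + E Σ E ⪯ Σ⁺ + (ε + ε²) I`.
-/

namespace Matrix

variable {n : Type*}

lemma PosSemidef.of_sub_smul_one [DecidableEq n] {X : Matrix n n ℝ} {c : ℝ} (hc : 0 ≤ c)
    (h : (X - c • 1).PosSemidef) : X.PosSemidef := by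
  simpa using h.add (PosSemidef.one.smul hc)

variable [Fintype n]

lemma dotProduct_mulVec_eq_sum (X : Matrix n n ℝ) (w v : n → ℝ) :
    w ⬝ᵥ (X *ᵥ v) = ∑ i, ∑ j, w i * X i j * v j := by
  simp [dotProduct, mulVec, mul_sum, mul_assoc]

lemma IsHermitian.dotProduct_mulVec_comm {X : Matrix n n ℝ} (hX : X.IsHermitian) (w v : n → ℝ) :
    w ⬝ᵥ (X *ᵥ v) = v ⬝ᵥ (X *ᵥ w) := by
  rw [dotProduct_mulVec, ← mulVec_transpose, ← conjTranspose_eq_transpose_of_trivial, hX,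
    dotProduct_comm]

lemma IsHermitian.dotProduct_mulVec_mul_mul {X : Matrix n n ℝ} (hX : X.IsHermitian)
    (B : Matrix n n ℝ) (v : n → ℝ) :
    v ⬝ᵥ ((X * B * X) *ᵥ v) = (X *ᵥ v) ⬝ᵥ (B *ᵥ (X *ᵥ v)) := by
  rw [← mulVec_mulVec, ← mulVec_mulVec, hX.dotProduct_mulVec_comm, dotProduct_comm]

/-- Polarization: test the quadratic-form bound on `ε v ± E v`. -/
lemma IsHermitian.mulVec_dotProduct_mulVec_le_of_abs_le {E : Matrix n n ℝ} (hE : E.IsHermitian)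
    {ε : ℝ} (hε : 0 < ε) (h : ∀ v, |v ⬝ᵥ (E *ᵥ v)| ≤ ε * (v ⬝ᵥ v)) (v : n → ℝ) :
    (E *ᵥ v) ⬝ᵥ (E *ᵥ v) ≤ ε ^ 2 * (v ⬝ᵥ v) := by
  have hplus := (abs_le.1 (h (ε • v + E *ᵥ v))).2
  have hminus := (abs_le.1 (h (ε • v - E *ᵥ v))).1
  simp only [mulVec_add, mulVec_sub, mulVec_smul, dotProduct_add, add_dotProduct,
    dotProduct_sub, sub_dotProduct, dotProduct_smul, smul_dotProduct, smul_eq_mul,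
    hE.dotProduct_mulVec_comm v] at hplus hminus
  nlinarith

variable [DecidableEq n] {X : Matrix n n ℝ} {c : ℝ}

lemma dotProduct_mulVec_le_of_posSemidef_smul_one_sub (h : (c • 1 - X).PosSemidef)
    (v : n → ℝ) : v ⬝ᵥ (X *ᵥ v) ≤ c * (v ⬝ᵥ v) := by
  have := h.dotProduct_mulVec_nonneg v
  simp only [star_trivial, sub_mulVec, smul_mulVec, one_mulVec, dotProduct_sub,
    dotProduct_smul, smul_eq_mul] at this
  linarith

lemma dotProduct_mulVec_le_of_posSemidef_one_sub (h : (1 - X).PosSemidef) (v : n → ℝ) :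
    v ⬝ᵥ (X *ᵥ v) ≤ v ⬝ᵥ v := by
  simpa using dotProduct_mulVec_le_of_posSemidef_smul_one_sub (c := 1) (by rwa [one_smul]) v

lemma le_dotProduct_mulVec_of_posSemidef_sub_smul_one (h : (X - c • 1).PosSemidef)
    (v : n → ℝ) : c * (v ⬝ᵥ v) ≤ v ⬝ᵥ (X *ᵥ v) := by
  have := h.dotProduct_mulVec_nonneg v
  simp only [star_trivial, sub_mulVec, smul_mulVec, one_mulVec, dotProduct_sub,
    dotProduct_smul, smul_eq_mul] at this
  linarith

lemma PosDef.of_sub_smul_one (hc : 0 < c) (h : (X - c • 1).PosSemidef) : X.PosDef :=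
  PosDef.of_dotProduct_mulVec_pos (h.of_sub_smul_one hc.le).isHermitian fun v hv => by
    simpa using lt_of_lt_of_le (mul_pos hc (dotProduct_star_self_pos_iff.mpr hv))
      (le_dotProduct_mulVec_of_posSemidef_sub_smul_one h v)

/-- Expand `0 ≤ (v - c⁻¹ X v) ⬝ X (v - c⁻¹ X v)` and bound `(X v) ⬝ X (X v) ≤ c ‖X v‖²`. -/
lemma PosSemidef.mulVec_dotProduct_mulVec_le (hc : 0 < c) (hX : X.PosSemidef)
    (h : (c • 1 - X).PosSemidef) (v : n → ℝ) :
    (X *ᵥ v) ⬝ᵥ (X *ᵥ v) ≤ c * (v ⬝ᵥ (X *ᵥ v)) := by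
  have h0 := hX.dotProduct_mulVec_nonneg (v - c⁻¹ • (X *ᵥ v))
  simp only [star_trivial, mulVec_sub, mulVec_smul, dotProduct_sub, sub_dotProduct,
    dotProduct_smul, smul_dotProduct, smul_eq_mul, hX.isHermitian.dotProduct_mulVec_comm v] at h0
  have h1 : c⁻¹ * ((X *ᵥ v) ⬝ᵥ (X *ᵥ (X *ᵥ v))) ≤ (X *ᵥ v) ⬝ᵥ (X *ᵥ v) := by
    rw [inv_mul_le_iff₀ hc]
    exact dotProduct_mulVec_le_of_posSemidef_smul_one_sub h (X *ᵥ v)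
  have h2 : c⁻¹ * ((X *ᵥ v) ⬝ᵥ (X *ᵥ v)) ≤ v ⬝ᵥ (X *ᵥ v) := by
    linarith [mul_le_mul_of_nonneg_left h1 (inv_nonneg.2 hc.le)]
  rwa [inv_mul_le_iff₀ hc] at h2

lemma abs_apply_le_of_posSemidef (hc : 0 < c) (hX : X.PosSemidef) (h : (c • 1 - X).PosSemidef)
    (i j : n) : |X i j| ≤ c := by
  have hcol := hX.mulVec_dotProduct_mulVec_le hc h (Pi.single j 1)
  have hjj := dotProduct_mulVec_le_of_posSemidef_smul_one_sub h (Pi.single j 1)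
  simp only [mulVec_single_one, dotProduct_single_one, single_one_dotProduct, col_apply,
    Pi.single_eq_same, mul_one] at hcol hjj
  have hij : X i j ^ 2 ≤ X.col j ⬝ᵥ X.col j := by
    simpa [dotProduct, sq] using
      single_le_sum (f := fun k => X k j * X k j) (fun k _ => mul_self_nonneg _) (mem_univ i)
  exact abs_le_of_sq_le_sq
    ((hij.trans hcol).trans (by rw [sq]; exact mul_le_mul_of_nonneg_left hjj hc.le)) hc.le

lemma dotProduct_mulVec_mul_mul_self_le (hc : 0 < c) (hX : X.PosSemidef)
    (h : (c • 1 - X).PosSemidef) {B : Matrix n n ℝ} (hB : (1 - B).PosSemidef) (v : n → ℝ) :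
    v ⬝ᵥ ((X * B * X) *ᵥ v) ≤ c * (v ⬝ᵥ (X *ᵥ v)) := by
  rw [hX.isHermitian.dotProduct_mulVec_mul_mul]
  exact (dotProduct_mulVec_le_of_posSemidef_one_sub hB _).trans
    (hX.mulVec_dotProduct_mulVec_le hc h v)

lemma dotProduct_mulVec_mul_mul_le_of_abs_sub_inv_le {S Sig : Matrix n n ℝ} {ε : ℝ}
    (hS : S.IsHermitian) (hSig : Sig.PosDef) (hSig_le : (1 - Sig).PosSemidef) (hε : 0 < ε)
    (h : ∀ v, |v ⬝ᵥ ((S - Sig⁻¹) *ᵥ v)| ≤ ε * (v ⬝ᵥ v)) (v : n → ℝ) :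
    v ⬝ᵥ ((S * Sig * S) *ᵥ v) ≤ v ⬝ᵥ (S *ᵥ v) + (ε + ε ^ 2) * (v ⬝ᵥ v) := by
  set E := S - Sig⁻¹
  have hE : E.IsHermitian := hS.sub hSig.isHermitian.inv
  have hdecomp : S * Sig * S = S + E + E * Sig * E := by
    have hunit := (isUnit_iff_isUnit_det Sig).1 hSig.isUnit
    rw [show S = Sig⁻¹ + E by simp [E]]
    simp only [add_mul, mul_add, nonsing_inv_mul _ hunit, mul_nonsing_inv _ hunit,
      Matrix.mul_assoc, mul_one, one_mul]
    abel
  have hsandwich : v ⬝ᵥ ((E * Sig * E) *ᵥ v) ≤ ε ^ 2 * (v ⬝ᵥ v) := by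
    rw [hE.dotProduct_mulVec_mul_mul]
    exact (dotProduct_mulVec_le_of_posSemidef_one_sub hSig_le _).trans
      (hE.mulVec_dotProduct_mulVec_le_of_abs_le hε h v)
  have hEv := (abs_le.1 (h v)).2
  rw [hdecomp, add_mulVec, add_mulVec, dotProduct_add, dotProduct_add]
  linarith

lemma posSemidef_two_smul_add_smul_one_sub {S Sig Q : Matrix n n ℝ} {ε κ s t : ℝ}
    (hS : S.PosSemidef) (hSig : Sig.PosDef) (hSig_le : (1 - Sig).PosSemidef) (hε : 0 < ε)
    (hε_le : ε ≤ 1) (h : ∀ v, |v ⬝ᵥ ((S - Sig⁻¹) *ᵥ v)| ≤ ε * (v ⬝ᵥ v)) (hκ : 3 * ε ≤ κ)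
    (hQ : Q.IsHermitian) (hs : s ≤ 1) (ht : t ≤ 1)
    (hQ_le : ∀ v, v ⬝ᵥ (Q *ᵥ v) ≤ s * (v ⬝ᵥ ((S * Sig * S) *ᵥ v)) + t * (v ⬝ᵥ (S *ᵥ v))) :
    ((2 : ℝ) • S + κ • 1 - Q).PosSemidef := by
  refine PosSemidef.of_dotProduct_mulVec_nonneg (((hS.smul zero_le_two).add
    (PosSemidef.one.smul (by linarith))).isHermitian.sub hQ) fun v => ?_
  have hsandwich := dotProduct_mulVec_mul_mul_le_of_abs_sub_inv_le hS.isHermitian hSig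
    hSig_le hε h v
  have hSv : 0 ≤ v ⬝ᵥ (S *ᵥ v) := by simpa using hS.dotProduct_mulVec_nonneg v
  have hSSigS : 0 ≤ v ⬝ᵥ ((S * Sig * S) *ᵥ v) := by
    simpa [hS.isHermitian.dotProduct_mulVec_mul_mul] using
      hSig.posSemidef.dotProduct_mulVec_nonneg (S *ᵥ v)
  have hvv : 0 ≤ v ⬝ᵥ v := by simpa using dotProduct_star_self_nonneg v
  simp only [star_trivial, sub_mulVec, add_mulVec, smul_mulVec, one_mulVec, dotProduct_sub,
    dotProduct_add, dotProduct_smul, smul_eq_mul]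
  linarith [hQ_le v, mul_le_of_le_one_left hSv ht, mul_le_of_le_one_left hSSigS hs,
    mul_le_mul_of_nonneg_right hκ hvv,
    mul_le_mul_of_nonneg_right (show ε ^ 2 ≤ 2 * ε by nlinarith) hvv]

end Matrix

lemma Finset.sum_sum_le_of_diag_le_of_offDiag_eq {ι : Type*} [Fintype ι] [DecidableEq ι]
    {f : ι → ι → ℝ} {a b : ℝ} (hdiag : ∀ m, f m m ≤ a) (hoff : ∀ m m', m ≠ m' → f m m' = b) :
    ∑ m, ∑ m', f m m' ≤ Fintype.card ι * (a + (Fintype.card ι - 1) * b) := by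
  have hrow : ∀ m, ∑ m', f m m' ≤ a + (Fintype.card ι - 1) * b := fun m => by
    rw [← add_sum_erase _ _ (mem_univ m),
      sum_congr rfl fun m' hm' => hoff m m' (ne_of_mem_erase hm').symm, sum_const,
      nsmul_eq_mul, cast_card_erase_of_mem (mem_univ m), card_univ]
    linarith [hdiag m]
  calc ∑ m, ∑ m', f m m' ≤ ∑ _m : ι, (a + (Fintype.card ι - 1) * b) :=
        sum_le_sum fun m _ => hrow m
    _ = _ := by rw [sum_const, card_univ, nsmul_eq_mul]

section EntrywiseIntegral

variable {Ω : Type*} [MeasurableSpace Ω] {P : Measure Ω} {n : Type*}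

noncomputable def entrywiseIntegral (P : Measure Ω) (X : Ω → Matrix n n ℝ) : Matrix n n ℝ :=
  Matrix.of fun i j => ∫ ω, X ω i j ∂P

@[simp]
lemma entrywiseIntegral_apply (X : Ω → Matrix n n ℝ) (i j : n) :
    entrywiseIntegral P X i j = ∫ ω, X ω i j ∂P := rfl

lemma entrywiseIntegral_smul (a : ℝ) (X : Ω → Matrix n n ℝ) :
    entrywiseIntegral P (fun ω => a • X ω) = a • entrywiseIntegral P X := by
  ext i j
  simp [integral_const_mul]

lemma entrywiseIntegral_sum {ι : Type*} [Fintype ι] {X : ι → Ω → Matrix n n ℝ}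
    (hX : ∀ k i j, Integrable (fun ω => X k ω i j) P) :
    entrywiseIntegral P (fun ω => ∑ k, X k ω) = ∑ k, entrywiseIntegral P (X k) := by
  ext i j
  simp only [entrywiseIntegral_apply, Matrix.sum_apply]
  exact integral_finsetSum _ fun k _ => hX k i j

lemma isHermitian_entrywiseIntegral {X : Ω → Matrix n n ℝ} (h : ∀ᵐ ω ∂P, (X ω).IsHermitian) :
    (entrywiseIntegral P X).IsHermitian :=
  Matrix.ext fun i j => integral_congr_ae (h.mono fun _ hω => hω.apply i j)

variable [Fintype n]

lemma integrable_dotProduct_mulVec {X : Ω → Matrix n n ℝ}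
    (hX : ∀ i j, Integrable (fun ω => X ω i j) P) (w v : n → ℝ) :
    Integrable (fun ω => w ⬝ᵥ (X ω *ᵥ v)) P := by
  simp only [dotProduct_mulVec_eq_sum]
  exact integrable_finsetSum _ fun i _ => integrable_finsetSum _ fun j _ =>
    ((hX i j).const_mul _).mul_const _

lemma integral_dotProduct_mulVec {X : Ω → Matrix n n ℝ}
    (hX : ∀ i j, Integrable (fun ω => X ω i j) P) (w v : n → ℝ) :
    ∫ ω, w ⬝ᵥ (X ω *ᵥ v) ∂P = w ⬝ᵥ (entrywiseIntegral P X *ᵥ v) := by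
  simp only [dotProduct_mulVec_eq_sum]
  rw [integral_finsetSum _ fun i _ => integrable_finsetSum _ fun j _ =>
    ((hX i j).const_mul _).mul_const _]
  refine sum_congr rfl fun i _ => ?_
  rw [integral_finsetSum _ fun j _ => ((hX i j).const_mul _).mul_const _]
  simp [integral_mul_const, integral_const_mul]

lemma posSemidef_entrywiseIntegral {X : Ω → Matrix n n ℝ}
    (hX : ∀ i j, Integrable (fun ω => X ω i j) P) (h : ∀ᵐ ω ∂P, (X ω).PosSemidef) :
    (entrywiseIntegral P X).PosSemidef := by
  refine PosSemidef.of_dotProduct_mulVec_nonneg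
    (isHermitian_entrywiseIntegral (h.mono fun _ hω => hω.isHermitian)) fun v => ?_
  rw [star_trivial, ← integral_dotProduct_mulVec hX]
  exact integral_nonneg_of_ae (h.mono fun ω hω => by simpa using hω.dotProduct_mulVec_nonneg v)

lemma integrable_mul_mul_apply {X Y : Ω → Matrix n n ℝ}
    (hX : ∀ i j, Integrable (fun ω => X ω i j) P)
    (hY : ∀ i j, AEStronglyMeasurable (fun ω => Y ω i j) P) {C : ℝ}
    (hYC : ∀ i j, ∀ᵐ ω ∂P, |Y ω i j| ≤ C) (B : Matrix n n ℝ) (i j : n) :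
    Integrable (fun ω => (X ω * B * Y ω) i j) P := by
  simp only [mul_apply, sum_mul]
  exact integrable_finsetSum _ fun l _ => integrable_finsetSum _ fun k _ =>
    ((hX i k).mul_const _).mul_bdd (hY l j) (by simpa only [Real.norm_eq_abs] using hYC l j)

variable {ι : Type*} [Fintype ι] {A : ι → Ω → Matrix n n ℝ} {B : Matrix n n ℝ}

lemma entrywiseIntegral_smul_sum_mul_mul_smul_sum
    (hA : ∀ m m' i j, Integrable (fun ω => (A m ω * B * A m' ω) i j) P) (a : ℝ) :
    entrywiseIntegral P (fun ω => (a • ∑ m, A m ω) * B * (a • ∑ m, A m ω)) =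
      a ^ 2 • ∑ m, ∑ m', entrywiseIntegral P (fun ω => A m ω * B * A m' ω) := by
  have hexpand : ∀ ω, (a • ∑ m, A m ω) * B * (a • ∑ m, A m ω) =
      a ^ 2 • ∑ m, ∑ m', A m ω * B * A m' ω := fun ω => by
    rw [Matrix.smul_mul, Matrix.mul_smul, Matrix.smul_mul, smul_smul, ← sq, sum_mul, sum_mul]
    simp_rw [mul_sum]
  simp_rw [hexpand, entrywiseIntegral_smul]
  rw [entrywiseIntegral_sum fun m i j => ?_]
  · simp_rw [entrywiseIntegral_sum (hA _)]
  · simpa only [Matrix.sum_apply] using integrable_finsetSum _ fun m' _ => hA m m' i j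

lemma isHermitian_entrywiseIntegral_smul_sum_mul_mul_smul_sum
    (hA : ∀ m, ∀ᵐ ω ∂P, (A m ω).PosSemidef) (hB : B.IsHermitian) (a : ℝ) :
    (entrywiseIntegral P (fun ω => (a • ∑ m, A m ω) * B * (a • ∑ m, A m ω))).IsHermitian := by
  refine isHermitian_entrywiseIntegral ((ae_all_iff.2 hA).mono fun ω hω => ?_)
  have hsum : (a • ∑ m, A m ω).IsHermitian :=
    (posSemidef_sum univ fun m _ => hω m).isHermitian.smul (IsSelfAdjoint.all a)
  simpa only [hsum.eq] using isHermitian_conjTranspose_mul_mul (a • ∑ m, A m ω) hB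

end EntrywiseIntegral

section RandomMatrix

variable {Ω : Type*} [MeasurableSpace Ω] {P : Measure Ω} {d : ℕ}

lemma measurable_matrix_apply (i j : Fin d) :
    Measurable fun X : Matrix (Fin d) (Fin d) ℝ => X i j :=
  (measurable_pi_apply j).comp (measurable_pi_apply (X := fun _ : Fin d => Fin d → ℝ) i)

lemma integrable_apply_of_posSemidef [IsFiniteMeasure P] {X : Ω → Matrix (Fin d) (Fin d) ℝ}
    (hXm : Measurable X) {c : ℝ} (hc : 0 < c)
    (hX : ∀ᵐ ω ∂P, (X ω).PosSemidef ∧ (c • 1 - X ω).PosSemidef) (i j : Fin d) :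
    Integrable (fun ω => X ω i j) P :=
  Integrable.of_bound ((measurable_matrix_apply i j).comp hXm).aestronglyMeasurable c
    (hX.mono fun _ hω => by simpa using abs_apply_le_of_posSemidef hc hω.1 hω.2 i j)

lemma entrywiseIntegral_mul_mul_of_indepFun {X Y : Ω → Matrix (Fin d) (Fin d) ℝ}
    (hXY : IndepFun X Y P) (hX : ∀ i j, Integrable (fun ω => X ω i j) P)
    (hY : ∀ i j, Integrable (fun ω => Y ω i j) P) (B : Matrix (Fin d) (Fin d) ℝ) :
    entrywiseIntegral P (fun ω => X ω * B * Y ω) =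
      entrywiseIntegral P X * B * entrywiseIntegral P Y := by
  have hentry : ∀ i k l j, IndepFun (fun ω => X ω i k) (fun ω => Y ω l j) P := fun i k l j =>
    hXY.comp (measurable_matrix_apply i k) (measurable_matrix_apply l j)
  have hint : ∀ i k l j, Integrable (fun ω => X ω i k * B k l * Y ω l j) P := fun i k l j => by
    simpa only [mul_right_comm, Pi.mul_apply] using
      ((hentry i k l j).integrable_mul (hX i k) (hY l j)).mul_const (B k l)
  ext i j
  simp only [entrywiseIntegral_apply, mul_apply, sum_mul]
  rw [integral_finsetSum _ fun l _ => integrable_finsetSum _ fun k _ => hint i k l j]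
  refine sum_congr rfl fun l _ => ?_
  rw [integral_finsetSum _ fun k _ => hint i k l j]
  refine sum_congr rfl fun k _ => ?_
  simp only [mul_right_comm _ (B k l), integral_mul_const]
  rw [← (hentry i k l j).integral_mul_eq_mul_integral (hX i k).aestronglyMeasurable
    (hY l j).aestronglyMeasurable]
  rfl

theorem dotProduct_mulVec_entrywiseIntegral_average_le [IsFiniteMeasure P] {M : ℕ} (hM : 0 < M)
    {A : Fin M → Ω → Matrix (Fin d) (Fin d) ℝ} (hmeas : ∀ m, Measurable (A m))
    (hindep : iIndepFun A P) {c : ℝ} (hc : 0 < c)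
    (hA : ∀ m, ∀ᵐ ω ∂P, (A m ω).PosSemidef ∧ (c • 1 - A m ω).PosSemidef)
    {S : Matrix (Fin d) (Fin d) ℝ} (hS : ∀ m, entrywiseIntegral P (A m) = S)
    {B : Matrix (Fin d) (Fin d) ℝ} (hB : (1 - B).PosSemidef) (v : Fin d → ℝ) :
    v ⬝ᵥ (entrywiseIntegral P (fun ω =>
        ((1 / (M : ℝ)) • ∑ m, A m ω) * B * ((1 / (M : ℝ)) • ∑ m, A m ω)) *ᵥ v) ≤
      (1 - 1 / M) * (v ⬝ᵥ ((S * B * S) *ᵥ v)) + c / M * (v ⬝ᵥ (S *ᵥ v)) := by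
  have hAint m := integrable_apply_of_posSemidef (hmeas m) hc (hA m)
  have hprod : ∀ m m' i j, Integrable (fun ω => (A m ω * B * A m' ω) i j) P := fun m m' =>
    integrable_mul_mul_apply (hAint m) (fun i j => (hAint m' i j).aestronglyMeasurable)
      (fun i j => (hA m').mono fun _ hω => abs_apply_le_of_posSemidef hc hω.1 hω.2 i j) B
  have hdiag : ∀ m, v ⬝ᵥ (entrywiseIntegral P (fun ω => A m ω * B * A m ω) *ᵥ v) ≤
      c * (v ⬝ᵥ (S *ᵥ v)) := fun m => by
    rw [← integral_dotProduct_mulVec (hprod m m), ← hS m, ← integral_dotProduct_mulVec (hAint m),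
      ← integral_const_mul]
    exact integral_mono_ae (integrable_dotProduct_mulVec (hprod m m) v v)
      ((integrable_dotProduct_mulVec (hAint m) v v).const_mul c)
      ((hA m).mono fun _ hω => dotProduct_mulVec_mul_mul_self_le hc hω.1 hω.2 hB v)
  have hoff : ∀ m m', m ≠ m' →
      v ⬝ᵥ (entrywiseIntegral P (fun ω => A m ω * B * A m' ω) *ᵥ v) =
        v ⬝ᵥ ((S * B * S) *ᵥ v) := fun m m' h => by
    rw [entrywiseIntegral_mul_mul_of_indepFun (hindep.indepFun h) (hAint m) (hAint m') B, hS, hS]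
  have hsum := sum_sum_le_of_diag_le_of_offDiag_eq hdiag hoff
  rw [entrywiseIntegral_smul_sum_mul_mul_smul_sum hprod, smul_mulVec, dotProduct_smul]
  simp only [sum_mulVec, dotProduct_sum, smul_eq_mul, Fintype.card_fin] at hsum ⊢
  have hM' : (0 : ℝ) < M := Nat.cast_pos.2 hM
  calc (1 / (M : ℝ)) ^ 2 * _ ≤ (1 / (M : ℝ)) ^ 2 * (M * (c * (v ⬝ᵥ (S *ᵥ v)) +
        (M - 1) * (v ⬝ᵥ ((S * B * S) *ᵥ v)))) := by gcongr
    _ = _ := by field_simp; ring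

end RandomMatrix

lemma one_le_log_three_mul_div {γ M : ℝ} (hγ : 0 < γ) (hγ' : γ < 1 / 2) (hM : 1 ≤ M) :
    1 ≤ Real.log (3 * M / γ) := by
  have h6 : 6 < 3 * M / γ := by rw [lt_div_iff₀ hγ]; linarith
  rw [Real.le_log_iff_exp_le (by positivity)]
  linarith [Real.exp_one_lt_d9]

lemma one_le_mul_of_mul_log_lt {γ : ℝ} {d M : ℕ} (hγ : 0 < γ) (hγ' : γ < 1 / 2) (hM : 0 < M)
    (hd : 0 < d) (h : 8 * d / (γ * M) * Real.log (3 * M / γ) < 1 / 8) : 1 ≤ γ * M := by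
  have hγM : 0 < γ * M := by positivity
  have hlog := one_le_log_three_mul_div hγ hγ' (Nat.one_le_cast.2 hM)
  have h8 : 8 * d / (γ * M) < 1 / 8 :=
    (le_mul_of_one_le_right (by positivity) hlog).trans_lt h
  rw [div_lt_iff₀ hγM] at h8
  nlinarith [(Nat.one_le_cast (α := ℝ)).2 hd]

theorem stmt_7_general (d M : ℕ) (hM : 0 < M) (γ ε : ℝ)
    (hγ : 0 < γ) (hγ' : γ < 1 / 2) (hε : 0 < ε) (hε' : ε < 1 / 16)
    {Ω : Type*} [MeasurableSpace Ω] (P : Measure Ω) [IsProbabilityMeasure P]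
    (A : Fin M → Ω → Matrix (Fin d) (Fin d) ℝ)
    (hmeas : ∀ m, Measurable (A m))
    (hindep : iIndepFun A P)
    (hblock : ∀ m, ∀ᵐ ω ∂P,
      (A m ω - (1 / 2 : ℝ) • (1 : Matrix (Fin d) (Fin d) ℝ)).PosSemidef ∧
      ((1 / γ) • (1 : Matrix (Fin d) (Fin d) ℝ) - A m ω).PosSemidef)
    (Sig : Matrix (Fin d) (Fin d) ℝ)
    (hSiglow : (Sig - γ • (1 : Matrix (Fin d) (Fin d) ℝ)).PosSemidef)
    (hSighigh : ((1 : Matrix (Fin d) (Fin d) ℝ) - Sig).PosSemidef)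
    (Splus : Matrix (Fin d) (Fin d) ℝ)
    (hmean : ∀ m i j, (∫ ω, A m ω i j ∂P) = Splus i j)
    (hbias : ∀ v : Fin d → ℝ, |v ⬝ᵥ ((Splus - Sig⁻¹) *ᵥ v)| ≤ ε * (v ⬝ᵥ v))
    (hMbig : (8 * d / (γ * M)) * Real.log (3 * M / γ) < 1 / 8)
    (EQ : Matrix (Fin d) (Fin d) ℝ)
    (hEQ : ∀ i j, EQ i j = ∫ ω,
      (((1 / (M : ℝ)) • ∑ m, A m ω) * Sig * ((1 / (M : ℝ)) • ∑ m, A m ω)) i j ∂P) :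
    ((2 : ℝ) • Splus
      + (3 * ε + (12 * d / (γ * M)) * Real.log (3 * M / γ)) • (1 : Matrix (Fin d) (Fin d) ℝ)
      - EQ).PosSemidef := by
  rcases Nat.eq_zero_or_pos d with rfl | hd
  · rw [Subsingleton.elim (_ - EQ) 0]
    exact PosSemidef.zero
  have hA : ∀ m, ∀ᵐ ω ∂P, (A m ω).PosSemidef ∧ ((1 / γ) • 1 - A m ω).PosSemidef := fun m =>
    (hblock m).mono fun _ h => ⟨h.1.of_sub_smul_one (by norm_num), h.2⟩
  have hS : ∀ m, entrywiseIntegral P (A m) = Splus := fun m => Matrix.ext (hmean m)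
  have hSpsd : Splus.PosSemidef := hS ⟨0, hM⟩ ▸ posSemidef_entrywiseIntegral
    (integrable_apply_of_posSemidef (hmeas _) (by positivity) (hA _)) ((hA _).mono fun _ h => h.1)
  have hSig : Sig.PosDef := PosDef.of_sub_smul_one hγ hSiglow
  have hEQ' : EQ = entrywiseIntegral P (fun ω =>
      ((1 / (M : ℝ)) • ∑ m, A m ω) * Sig * ((1 / (M : ℝ)) • ∑ m, A m ω)) := Matrix.ext hEQ
  have hlog := one_le_log_three_mul_div hγ hγ' (Nat.one_le_cast.2 hM)
  have hγM : 1 / γ / M ≤ 1 := by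
    rw [div_div, div_le_one (by positivity)]
    exact one_le_mul_of_mul_log_lt hγ hγ' hM hd hMbig
  have hκ : 3 * ε ≤ 3 * ε + (12 * d / (γ * M)) * Real.log (3 * M / γ) :=
    le_add_of_nonneg_right (mul_nonneg (by positivity) (zero_le_one.trans hlog))
  have hEQ_herm : EQ.IsHermitian := hEQ' ▸
    isHermitian_entrywiseIntegral_smul_sum_mul_mul_smul_sum (fun m => (hA m).mono fun _ h => h.1)
      hSig.isHermitian _
  exact posSemidef_two_smul_add_smul_one_sub hSpsd hSig hSighigh hε (by linarith) hbias hκ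
    hEQ_herm (sub_le_self 1 (by positivity : (0 : ℝ) ≤ 1 / M)) hγM fun v => hEQ' ▸
      dotProduct_mulVec_entrywiseIntegral_average_le hM hmeas hindep (one_div_pos.2 hγ) hA hS
        hSighigh v

/-- Second-moment bound for averaged inverse-covariance estimators: if the i.i.d. random
matrices `Σ̂⁺_m` satisfy `(1/2) I ⪯ Σ̂⁺_m ⪯ (1/γ) I` a.s., their mean `Σ⁺` is within `ε`
of `Σ⁻¹` in operator norm (expressed via quadratic forms) for a fixed `Σ` with
`γ I ⪯ Σ ⪯ I`, `0 < ε < 1/16`, `0 < γ < 1/2`, and `(8d/(γM)) log(3M/γ) < 1/8`, then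
`E[Σ̂⁺ Σ Σ̂⁺] ⪯ 2 E[Σ̂⁺] + (3ε + (12d/(γM)) log(3M/γ)) I` for the empirical average
`Σ̂⁺ = (1/M) ∑_m Σ̂⁺_m`. -/
theorem stmt_7 (d M : ℕ) (hM : 0 < M) (γ ε : ℝ)
    (hγ : 0 < γ) (hγ' : γ < 1 / 2) (hε : 0 < ε) (hε' : ε < 1 / 16)
    {Ω : Type*} [MeasurableSpace Ω] (P : Measure Ω) [IsProbabilityMeasure P]
    (A : Fin M → Ω → Matrix (Fin d) (Fin d) ℝ)
    (hmeas : ∀ m, Measurable (A m))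
    (hindep : iIndepFun A P)
    (hident : ∀ m m', IdentDistrib (A m) (A m') P P)
    (hblock : ∀ m, ∀ᵐ ω ∂P,
      (A m ω - (1 / 2 : ℝ) • (1 : Matrix (Fin d) (Fin d) ℝ)).PosSemidef ∧
      ((1 / γ) • (1 : Matrix (Fin d) (Fin d) ℝ) - A m ω).PosSemidef)
    (Sig : Matrix (Fin d) (Fin d) ℝ)
    (hSiglow : (Sig - γ • (1 : Matrix (Fin d) (Fin d) ℝ)).PosSemidef)
    (hSighigh : ((1 : Matrix (Fin d) (Fin d) ℝ) - Sig).PosSemidef)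
    (Splus : Matrix (Fin d) (Fin d) ℝ)
    (hmean : ∀ m i j, (∫ ω, A m ω i j ∂P) = Splus i j)
    (hbias : ∀ v : Fin d → ℝ, |v ⬝ᵥ ((Splus - Sig⁻¹) *ᵥ v)| ≤ ε * (v ⬝ᵥ v))
    (hMbig : (8 * d / (γ * M)) * Real.log (3 * M / γ) < 1 / 8)
    (EQ : Matrix (Fin d) (Fin d) ℝ)
    (hEQ : ∀ i j, EQ i j = ∫ ω,
      (((1 / (M : ℝ)) • ∑ m, A m ω) * Sig * ((1 / (M : ℝ)) • ∑ m, A m ω)) i j ∂P) :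
    ((2 : ℝ) • Splus
      + (3 * ε + (12 * d / (γ * M)) * Real.log (3 * M / γ)) • (1 : Matrix (Fin d) (Fin d) ℝ)
      - EQ).PosSemidef :=
  stmt_7_general d M hM γ ε hγ hγ' hε hε' P A hmeas hindep hblock Sig hSiglow hSighigh Splus hmean
    hbias hMbig EQ hEQ
end

section
/- In a finite-horizon MDP (S, A, H, P, ℓ), for any two policies π, π′ and any sequence of functions Q̂^π_h : S×A → ℝ with V̂^π_h(s) := ⟨π_h(·|s), Q̂^π_h(s,·)⟩ and V̂^π_{H+1} ≡ 0, it holds that V̂^π₁(s₁) − V^{π′}₁(s₁) = ∑_{h=1}^H E_{s_h∼d^{π′}_h}[⟨Q̂^π_h(s_h,·), π_h(·|s_h) − π′_h(·|s_h)⟩] + ∑_{h=1}^H E_{(s_h,a_h)∼d^{π′}_h}[Q̂^π_h(s_h,a_h) − ℓ_h(s_h,a_h) − P_h V̂^π_{h+1}(s_h,a_h)]. -/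
open Finset

/-- Extended value difference lemma for a finite-horizon MDP (steps indexed `0, …, H-1`):
for any two policies `π, π'` and any functions `Q̂_h` with
`V̂_h(s) = ⟨π_h(·|s), Q̂_h(s,·)⟩` and `V̂_H ≡ 0`,
`V̂_0(s₁) − V^{π'}_0(s₁)` equals the sum over steps of the occupancy-weighted policy
difference term plus the occupancy-weighted Bellman error term. -/
theorem stmt_10 {S A : Type*} [Fintype S] [Fintype A] [DecidableEq S]
    (H : ℕ) (s₁ : S)
    (Pr : ℕ → S → A → S → ℝ)
    (hPr0 : ∀ h s a s', 0 ≤ Pr h s a s') (hPr1 : ∀ h s a, ∑ s', Pr h s a s' = 1)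
    (ℓ : ℕ → S → A → ℝ)
    (π π' : ℕ → S → A → ℝ)
    (hπ0 : ∀ h s a, 0 ≤ π h s a) (hπ1 : ∀ h s, ∑ a, π h s a = 1)
    (hπ'0 : ∀ h s a, 0 ≤ π' h s a) (hπ'1 : ∀ h s, ∑ a, π' h s a = 1)
    -- occupancy measure of π' started from s₁
    (d : ℕ → S → ℝ)
    (hd0 : ∀ s, d 0 s = if s = s₁ then 1 else 0)
    (hdrec : ∀ h s', d (h + 1) s' = ∑ s, ∑ a, d h s * π' h s a * Pr h s a s')
    -- true value functions of π' (Bellman equations, horizon H)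
    (Q' : ℕ → S → A → ℝ) (V' : ℕ → S → ℝ)
    (hV'H : ∀ s, V' H s = 0)
    (hQ' : ∀ h, h < H → ∀ s a, Q' h s a = ℓ h s a + ∑ s', Pr h s a s' * V' (h + 1) s')
    (hV' : ∀ h, h < H → ∀ s, V' h s = ∑ a, π' h s a * Q' h s a)
    -- arbitrary Q̂ and the induced V̂
    (Qhat : ℕ → S → A → ℝ) (Vhat : ℕ → S → ℝ)
    (hVhatH : ∀ s, Vhat H s = 0)
    (hVhat : ∀ h, h < H → ∀ s, Vhat h s = ∑ a, π h s a * Qhat h s a) :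
    Vhat 0 s₁ - V' 0 s₁ =
      (∑ h ∈ Finset.range H, ∑ s, d h s *
          ∑ a, Qhat h s a * (π h s a - π' h s a))
      + ∑ h ∈ Finset.range H, ∑ s, ∑ a, d h s * π' h s a *
          (Qhat h s a - ℓ h s a - ∑ s', Pr h s a s' * Vhat (h + 1) s') := by
  set F : ℕ → ℝ := fun h => ∑ s, d h s * (Vhat h s - V' h s) with hF
  have hF1 : ∀ h, F (h + 1) = ∑ s, ∑ a, d h s * π' h s a *
      ∑ s', Pr h s a s' * (Vhat (h + 1) s' - V' (h + 1) s') := by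
    intro h
    simp only [hF, hdrec, Finset.sum_mul, Finset.mul_sum]
    rw [Finset.sum_comm]
    refine Finset.sum_congr rfl fun s _ => ?_
    rw [Finset.sum_comm]
    exact Finset.sum_congr rfl fun a _ => Finset.sum_congr rfl fun s' _ => by ring
  have key : ∀ h, h < H → F h - F (h + 1) =
      (∑ s, d h s * ∑ a, Qhat h s a * (π h s a - π' h s a))
      + ∑ s, ∑ a, d h s * π' h s a *
          (Qhat h s a - ℓ h s a - ∑ s', Pr h s a s' * Vhat (h + 1) s') := by
    intro h hh
    rw [hF1]
    simp only [hF, hVhat h hh, hV' h hh, hQ' h hh, mul_sub, Finset.sum_sub_distrib,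
      Finset.mul_sum, ← Finset.sum_add_distrib, ← Finset.sum_sub_distrib]
    refine Finset.sum_congr rfl fun s _ => Finset.sum_congr rfl fun a _ => ?_
    rw [Finset.sum_sub_distrib]
    simp only [mul_add, Finset.mul_sum]
    ring_nf
  have hF0 : F 0 = Vhat 0 s₁ - V' 0 s₁ := by
    simp [hF, hd0, ite_mul]
  have hFH : F H = 0 := by
    simp [hF, hVhatH, hV'H]
  have tele : F 0 - F H = ∑ h ∈ Finset.range H, (F h - F (h + 1)) :=
    (Finset.sum_range_sub' F H).symm
  rw [← hF0, ← sub_zero (F 0), ← hFH, tele, ← Finset.sum_add_distrib]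
  exact Finset.sum_congr rfl fun h hh => key h (Finset.mem_range.mp hh)
end

section
/- Suppose the approximate bonus-to-go functions satisfy, for all s, a, h, k: b^k_h(s,a) + P_h W̃^k_{h+1}(s,a) ≤ B̃^k_h(s,a) ≤ b^k_h(s,a) + P_h W̃^k_{h+1}(s,a) + 2b^{P,k}_h(s,a), where W̃^k_h(s) = ⟨π^k_h(·|s), B̃^k_h(s,·)⟩ and b^k_h, b^{P,k}_h ≥ 0. Then ∑_{k=1}^K ∑_{h=1}^H E_{s∼d*_h}[⟨B̃^k_h(s,·), π^k_h(·|s) − π*_h(·|s)⟩] ≤ 2∑_{k=1}^K ∑_{h=1}^H E_{(s,a)∼d^k_h}[b^{P,k}_h(s,a) + b^k_h(s,a)] − ∑_{k=1}^K ∑_{h=1}^H E_{(s,a)∼d*_h}[b^k_h(s,a)]. -/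
open Finset

/-- Exploration-term bound: in a finite-horizon MDP, if the approximate bonus-to-go
functions `B̃^k_h` satisfy the confidence bounds
`b^k_h + P_h W̃^k_{h+1} ≤ B̃^k_h ≤ b^k_h + P_h W̃^k_{h+1} + 2 b^{P,k}_h`
with `W̃^k_h(s) = ⟨π^k_h(·|s), B̃^k_h(s,·)⟩`, `W̃^k_H ≡ 0`, and nonnegative bonuses, then
`∑_{k,h} E_{s∼d*_h}[⟨B̃^k_h(s,·), π^k_h(·|s) − π*_h(·|s)⟩]
  ≤ 2 ∑_{k,h} E_{(s,a)∼d^k_h}[b^{P,k}_h + b^k_h] − ∑_{k,h} E_{(s,a)∼d*_h}[b^k_h]`.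
(Steps are indexed `0, …, H-1`, episodes `0, …, K-1`.) -/
theorem stmt_12 {S A : Type*} [Fintype S] [Fintype A] [DecidableEq S]
    (H K : ℕ) (s₁ : S)
    (Pr : ℕ → S → A → S → ℝ)
    (hPr0 : ∀ h s a s', 0 ≤ Pr h s a s') (hPr1 : ∀ h s a, ∑ s', Pr h s a s' = 1)
    -- episode policies π^k and comparator policy π*
    (πk : ℕ → ℕ → S → A → ℝ) (πstar : ℕ → S → A → ℝ)
    (hπk0 : ∀ k h s a, 0 ≤ πk k h s a) (hπk1 : ∀ k h s, ∑ a, πk k h s a = 1)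
    (hπstar0 : ∀ h s a, 0 ≤ πstar h s a) (hπstar1 : ∀ h s, ∑ a, πstar h s a = 1)
    -- occupancy measures of π^k and π*
    (dk : ℕ → ℕ → S → ℝ) (dstar : ℕ → S → ℝ)
    (hdk0 : ∀ k s, dk k 0 s = if s = s₁ then 1 else 0)
    (hdkrec : ∀ k h s', dk k (h + 1) s' = ∑ s, ∑ a, dk k h s * πk k h s a * Pr h s a s')
    (hdstar0 : ∀ s, dstar 0 s = if s = s₁ then 1 else 0)
    (hdstarrec : ∀ h s', dstar (h + 1) s' = ∑ s, ∑ a, dstar h s * πstar h s a * Pr h s a s')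
    -- bonuses and approximate bonus-to-go
    (b bP : ℕ → ℕ → S → A → ℝ)
    (hb0 : ∀ k h s a, 0 ≤ b k h s a) (hbP0 : ∀ k h s a, 0 ≤ bP k h s a)
    (Btil : ℕ → ℕ → S → A → ℝ) (Wtil : ℕ → ℕ → S → ℝ)
    (hWtilH : ∀ k s, Wtil k H s = 0)
    (hWtil : ∀ k h, h < H → ∀ s, Wtil k h s = ∑ a, πk k h s a * Btil k h s a)
    (hlow : ∀ k, k < K → ∀ h, h < H → ∀ s a,
      b k h s a + ∑ s', Pr h s a s' * Wtil k (h + 1) s' ≤ Btil k h s a)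
    (hhigh : ∀ k, k < K → ∀ h, h < H → ∀ s a,
      Btil k h s a ≤ b k h s a + ∑ s', Pr h s a s' * Wtil k (h + 1) s'
        + 2 * bP k h s a) :
    ∑ k ∈ Finset.range K, ∑ h ∈ Finset.range H, ∑ s, dstar h s *
        ∑ a, Btil k h s a * (πk k h s a - πstar h s a) ≤
      2 * ∑ k ∈ Finset.range K, ∑ h ∈ Finset.range H, ∑ s, ∑ a,
          dk k h s * πk k h s a * (bP k h s a + b k h s a)
      - ∑ k ∈ Finset.range K, ∑ h ∈ Finset.range H, ∑ s, ∑ a,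
          dstar h s * πstar h s a * b k h s a := by
  have hdstar_nn : ∀ h s, 0 ≤ dstar h s := by
    intro h
    induction h with
    | zero => intro s; rw [hdstar0]; positivity
    | succ n ih =>
      intro s'
      rw [hdstarrec]
      exact Finset.sum_nonneg fun s _ => Finset.sum_nonneg fun a _ =>
        mul_nonneg (mul_nonneg (ih s) (hπstar0 _ _ _)) (hPr0 _ _ _ _)
  have hdk_nn : ∀ k h s, 0 ≤ dk k h s := by
    intro k h
    induction h with
    | zero => intro s; rw [hdk0]; positivity
    | succ n ih =>
      intro s'
      rw [hdkrec]
      exact Finset.sum_nonneg fun s _ => Finset.sum_nonneg fun a _ =>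
        mul_nonneg (mul_nonneg (ih s) (hπk0 _ _ _ _)) (hPr0 _ _ _ _)
  have key : ∀ k, k < K →
      ∑ h ∈ Finset.range H, ∑ s, dstar h s *
          ∑ a, Btil k h s a * (πk k h s a - πstar h s a) ≤
        2 * ∑ h ∈ Finset.range H, ∑ s, ∑ a,
            dk k h s * πk k h s a * (bP k h s a + b k h s a)
        - ∑ h ∈ Finset.range H, ∑ s, ∑ a,
            dstar h s * πstar h s a * b k h s a := by
    intro k hk
    have claim1 : ∀ m n, n + m = H →
        ∑ h ∈ Finset.Ico n H,
          (∑ s, dstar h s * ∑ a, Btil k h s a * (πk k h s a - πstar h s a)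
            + ∑ s, ∑ a, dstar h s * πstar h s a * b k h s a)
          ≤ ∑ s, dstar n s * Wtil k n s := by
      intro m
      induction m with
      | zero =>
        intro n hn
        simp only [Nat.add_zero] at hn
        subst hn
        simp [hWtilH]
      | succ m ih =>
        intro n hn
        have hnH : n < H := by omega
        have hrec := ih (n + 1) (by omega)
        rw [Finset.sum_eq_sum_Ico_succ_bot hnH]
        have e1 : ∑ s, dstar n s * Wtil k n s
            = ∑ s, ∑ a, dstar n s * (πk k n s a * Btil k n s a) := by
          refine Finset.sum_congr rfl fun s _ => ?_
          rw [hWtil k n hnH, Finset.mul_sum]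
        have e3 : ∑ s', dstar (n + 1) s' * Wtil k (n + 1) s'
            = ∑ s, ∑ a, dstar n s * πstar n s a *
                ∑ s', Pr n s a s' * Wtil k (n + 1) s' := by
          calc ∑ s', dstar (n + 1) s' * Wtil k (n + 1) s'
              = ∑ s', ∑ s, ∑ a,
                  dstar n s * πstar n s a * Pr n s a s' * Wtil k (n + 1) s' := by
                refine Finset.sum_congr rfl fun s' _ => ?_
                rw [hdstarrec, Finset.sum_mul]
                exact Finset.sum_congr rfl fun s _ => by rw [Finset.sum_mul]
            _ = ∑ s, ∑ a, dstar n s * πstar n s a *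
                  ∑ s', Pr n s a s' * Wtil k (n + 1) s' := by
                rw [Finset.sum_comm]
                refine Finset.sum_congr rfl fun s _ => ?_
                rw [Finset.sum_comm]
                refine Finset.sum_congr rfl fun a _ => ?_
                rw [Finset.mul_sum]
                exact Finset.sum_congr rfl fun s' _ => by ring
        have step : ∑ s, ∑ a, dstar n s * πstar n s a *
              (b k n s a + ∑ s', Pr n s a s' * Wtil k (n + 1) s')
            ≤ ∑ s, ∑ a, dstar n s * πstar n s a * Btil k n s a := by
          refine Finset.sum_le_sum fun s _ => Finset.sum_le_sum fun a _ => ?_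
          exact mul_le_mul_of_nonneg_left (hlow k hk n hnH s a)
            (mul_nonneg (hdstar_nn n s) (hπstar0 n s a))
        have e4 : ∑ s, ∑ a, dstar n s * πstar n s a *
              (b k n s a + ∑ s', Pr n s a s' * Wtil k (n + 1) s')
            = ∑ s, ∑ a, dstar n s * πstar n s a * b k n s a
              + ∑ s, ∑ a, dstar n s * πstar n s a *
                  ∑ s', Pr n s a s' * Wtil k (n + 1) s' := by
          rw [← Finset.sum_add_distrib]
          refine Finset.sum_congr rfl fun s _ => ?_
          rw [← Finset.sum_add_distrib]
          exact Finset.sum_congr rfl fun a _ => by ring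
        have e2 : ∑ s, dstar n s * ∑ a, Btil k n s a * (πk k n s a - πstar n s a)
            = ∑ s, ∑ a, dstar n s * (πk k n s a * Btil k n s a)
              - ∑ s, ∑ a, dstar n s * πstar n s a * Btil k n s a := by
          rw [← Finset.sum_sub_distrib]
          refine Finset.sum_congr rfl fun s _ => ?_
          rw [← Finset.sum_sub_distrib, Finset.mul_sum]
          exact Finset.sum_congr rfl fun a _ => by ring
        rw [e1, e2]
        rw [e3] at hrec
        linarith [hrec, step, e4.symm.le, e4.le]
    have claim2 : ∀ m n, n + m = H →
        ∑ s, dk k n s * Wtil k n s ≤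
          ∑ h ∈ Finset.Ico n H, 2 * ∑ s, ∑ a,
            dk k h s * πk k h s a * (bP k h s a + b k h s a) := by
      intro m
      induction m with
      | zero =>
        intro n hn
        simp only [Nat.add_zero] at hn
        subst hn
        simp [hWtilH]
      | succ m ih =>
        intro n hn
        have hnH : n < H := by omega
        have hrec := ih (n + 1) (by omega)
        rw [Finset.sum_eq_sum_Ico_succ_bot hnH]
        have e1 : ∑ s, dk k n s * Wtil k n s
            = ∑ s, ∑ a, dk k n s * πk k n s a * Btil k n s a := by
          refine Finset.sum_congr rfl fun s _ => ?_
          rw [hWtil k n hnH, Finset.mul_sum]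
          exact Finset.sum_congr rfl fun a _ => by ring
        have e3 : ∑ s', dk k (n + 1) s' * Wtil k (n + 1) s'
            = ∑ s, ∑ a, dk k n s * πk k n s a *
                ∑ s', Pr n s a s' * Wtil k (n + 1) s' := by
          calc ∑ s', dk k (n + 1) s' * Wtil k (n + 1) s'
              = ∑ s', ∑ s, ∑ a,
                  dk k n s * πk k n s a * Pr n s a s' * Wtil k (n + 1) s' := by
                refine Finset.sum_congr rfl fun s' _ => ?_
                rw [hdkrec, Finset.sum_mul]
                exact Finset.sum_congr rfl fun s _ => by rw [Finset.sum_mul]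
            _ = ∑ s, ∑ a, dk k n s * πk k n s a *
                  ∑ s', Pr n s a s' * Wtil k (n + 1) s' := by
                rw [Finset.sum_comm]
                refine Finset.sum_congr rfl fun s _ => ?_
                rw [Finset.sum_comm]
                refine Finset.sum_congr rfl fun a _ => ?_
                rw [Finset.mul_sum]
                exact Finset.sum_congr rfl fun s' _ => by ring
        have step : ∑ s, ∑ a, dk k n s * πk k n s a * Btil k n s a
            ≤ ∑ s, ∑ a, dk k n s * πk k n s a *
                (2 * (bP k n s a + b k n s a) + ∑ s', Pr n s a s' * Wtil k (n + 1) s') := by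
          refine Finset.sum_le_sum fun s _ => Finset.sum_le_sum fun a _ => ?_
          refine mul_le_mul_of_nonneg_left ?_
            (mul_nonneg (hdk_nn k n s) (hπk0 k n s a))
          have h1 := hhigh k hk n hnH s a
          have h2 := hb0 k n s a
          linarith
        have e4 : ∑ s, ∑ a, dk k n s * πk k n s a *
              (2 * (bP k n s a + b k n s a) + ∑ s', Pr n s a s' * Wtil k (n + 1) s')
            = 2 * ∑ s, ∑ a, dk k n s * πk k n s a * (bP k n s a + b k n s a)
              + ∑ s, ∑ a, dk k n s * πk k n s a *
                  ∑ s', Pr n s a s' * Wtil k (n + 1) s' := by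
          rw [Finset.mul_sum, ← Finset.sum_add_distrib]
          refine Finset.sum_congr rfl fun s _ => ?_
          rw [Finset.mul_sum, ← Finset.sum_add_distrib]
          exact Finset.sum_congr rfl fun a _ => by ring
        rw [e3] at hrec
        calc ∑ s, dk k n s * Wtil k n s
            ≤ 2 * ∑ s, ∑ a, dk k n s * πk k n s a * (bP k n s a + b k n s a)
              + ∑ s, ∑ a, dk k n s * πk k n s a *
                  ∑ s', Pr n s a s' * Wtil k (n + 1) s' := by
              rw [e1]; linarith [step, e4.le]
          _ ≤ _ := by linarith [hrec]
    have h1 := claim1 H 0 (by omega)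
    have h2 := claim2 H 0 (by omega)
    have hinit : ∑ s, dstar 0 s * Wtil k 0 s = ∑ s, dk k 0 s * Wtil k 0 s := by
      refine Finset.sum_congr rfl fun s _ => ?_
      rw [hdstar0, hdk0]
    rw [← Finset.range_eq_Ico] at h1 h2
    rw [Finset.sum_add_distrib] at h1
    rw [← Finset.mul_sum] at h2
    rw [hinit] at h1
    linarith
  have hR : 2 * ∑ k ∈ Finset.range K, ∑ h ∈ Finset.range H, ∑ s, ∑ a,
          dk k h s * πk k h s a * (bP k h s a + b k h s a)
      - ∑ k ∈ Finset.range K, ∑ h ∈ Finset.range H, ∑ s, ∑ a,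
          dstar h s * πstar h s a * b k h s a
      = ∑ k ∈ Finset.range K,
          (2 * ∑ h ∈ Finset.range H, ∑ s, ∑ a,
              dk k h s * πk k h s a * (bP k h s a + b k h s a)
            - ∑ h ∈ Finset.range H, ∑ s, ∑ a,
              dstar h s * πstar h s a * b k h s a) := by
    rw [Finset.sum_sub_distrib, Finset.mul_sum]
  rw [hR]
  exact Finset.sum_le_sum fun k hkm => key k (Finset.mem_range.mp hkm)
end

section
/- Let (F_i) be a filtration and (X_i) a sequence of [0,B]-valued random variables with X_i measurable with respect to F_i. Then with probability at least 1 − δ, for all N ≥ 1: ∑_{i=1}^N E[X_i | F_{i−1}] ≤ 2·∑_{i=1}^N X_i + 4B·log(2N/δ). -/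
/-!
Put `S_N = ∑_{i=1}^N (E[X_i | F_{i-1}] / 2 - X_i) / B`. On `[0, 1]` we have
`e^{-x} ≤ 1 - x/2 ≤ e^{-x/2}`, so `E[e^{-X_i/B} | F_{i-1}] ≤ e^{-E[X_i | F_{i-1}]/(2B)}` and
`exp S_N` is a supermartingale starting at `1`. Markov's inequality then gives
`P(S_N > 2 log(2N/δ)) ≤ (δ/2N)^2 ≤ δ/(4N^2)`, and a union bound over `N` costs at most
`δ π^2/24 ≤ δ`. On the complement of the union, `S_N ≤ 2 log(2N/δ)` is the claimed inequality.
-/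

open MeasureTheory Finset Real

theorem Real.exp_neg_le_one_sub_div_two {x : ℝ} (h0 : 0 ≤ x) (h1 : x ≤ 1) :
    exp (-x) ≤ 1 - x / 2 := by
  have hconv := convexOn_exp.2 (Set.mem_univ (-1)) (Set.mem_univ 0) h0 (sub_nonneg.2 h1)
    (add_sub_cancel x 1)
  simp only [smul_eq_mul, mul_neg_one, mul_zero, add_zero, exp_zero, mul_one] at hconv
  nlinarith [exp_neg_one_lt_half]

section CondExp

variable {Ω : Type*} {m m0 : MeasurableSpace Ω} {P : Measure Ω} [IsFiniteMeasure P]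

lemma ae_condExp_mem_Icc (hm : m ≤ m0) {Y : Ω → ℝ} {a b : ℝ} (hY : Integrable Y P)
    (hYab : ∀ᵐ ω ∂P, Y ω ∈ Set.Icc a b) : ∀ᵐ ω ∂P, (P[Y|m]) ω ∈ Set.Icc a b := by
  have hlo : P[fun _ => a|m] ≤ᵐ[P] P[Y|m] :=
    condExp_mono (integrable_const a) hY (hYab.mono fun _ h => h.1)
  have hhi : P[Y|m] ≤ᵐ[P] P[fun _ => b|m] :=
    condExp_mono hY (integrable_const b) (hYab.mono fun _ h => h.2)
  rw [condExp_const hm] at hlo hhi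
  filter_upwards [hlo, hhi] with ω h1 h2 using ⟨h1, h2⟩

lemma integrable_exp_neg_div {Y : Ω → ℝ} {B : ℝ} (hB : 0 ≤ B) (hY : AEMeasurable Y P)
    (hY0 : ∀ᵐ ω ∂P, 0 ≤ Y ω) : Integrable (fun ω => exp (-(Y ω / B))) P :=
  .of_mem_Icc 0 1 (by fun_prop) <| hY0.mono fun _ h =>
    ⟨(exp_pos _).le, exp_le_one_iff.2 (neg_nonpos.2 (div_nonneg h hB))⟩

lemma condExp_exp_neg_div_le (hm : m ≤ m0) {Y : Ω → ℝ} {B : ℝ} (hB : 0 < B)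
    (hY : AEMeasurable Y P) (hYB : ∀ᵐ ω ∂P, Y ω ∈ Set.Icc 0 B) :
    P[fun ω => exp (-(Y ω / B))|m] ≤ᵐ[P] fun ω => exp (-((P[Y|m]) ω / (2 * B))) := by
  set c := (2 * B)⁻¹
  have hYint : Integrable Y P := .of_mem_Icc 0 B hY hYB
  have hexp_int := integrable_exp_neg_div hB.le hY (hYB.mono fun _ h => h.1)
  have hlin_int : Integrable (fun ω => 1 - c * Y ω) P :=
    (integrable_const 1).sub (hYint.const_mul c)
  have hchord : (fun ω => exp (-(Y ω / B))) ≤ᵐ[P] fun ω => 1 - c * Y ω := by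
    filter_upwards [hYB] with ω h
    refine (exp_neg_le_one_sub_div_two (div_nonneg h.1 hB.le) ((div_le_one hB).2 h.2)).trans_eq ?_
    simp only [c]
    field_simp
  have hcond : P[fun ω => 1 - c * Y ω|m] =ᵐ[P] fun ω => 1 - c * (P[Y|m]) ω := by
    filter_upwards [condExp_sub (m := m) (integrable_const 1) (hYint.const_mul c),
      condExp_smul (μ := P) c Y m] with ω hsub hsmul
    simp only [Pi.sub_apply, condExp_const hm] at hsub
    exact hsub.trans (congrArg (1 - ·) hsmul)
  filter_upwards [condExp_mono hexp_int hlin_int hchord, hcond] with ω hmono heq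
  calc _ ≤ _ := hmono
    _ = 1 - c * (P[Y|m]) ω := heq
    _ ≤ _ := by
      convert one_sub_le_exp_neg (c * (P[Y|m]) ω) using 3
      simp only [c]; field_simp

lemma integrable_exp_add_half_condExp_sub_div (hm : m ≤ m0) {V Y : Ω → ℝ} {B : ℝ}
    (hB : 0 < B) (hV : AEMeasurable V P) (hVint : Integrable (fun ω => exp (V ω)) P)
    (hY : AEMeasurable Y P) (hYB : ∀ᵐ ω ∂P, Y ω ∈ Set.Icc 0 B) :
    Integrable (fun ω => exp (V ω + ((P[Y|m]) ω / 2 - Y ω) / B)) P := by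
  have hE := ae_condExp_mem_Icc hm (.of_mem_Icc 0 B hY hYB) hYB
  have hEm : Measurable (P[Y|m]) := stronglyMeasurable_condExp.measurable.mono hm le_rfl
  refine (hVint.const_mul (exp (1 / 2))).mono' (by fun_prop) ?_
  filter_upwards [hYB, hE] with ω hY hE
  rw [norm_of_nonneg (exp_pos _).le, ← exp_add, add_comm (1 / 2)]
  have hinc : ((P[Y|m]) ω / 2 - Y ω) / B ≤ 1 / 2 := by
    rw [div_le_iff₀ hB]
    linarith [hY.1, hE.2]
  exact exp_le_exp.2 (by linarith)

lemma condExp_exp_add_half_condExp_sub_div_le (hm : m ≤ m0) {V Y : Ω → ℝ} {B : ℝ}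
    (hB : 0 < B) (hV : Measurable[m] V) (hVint : Integrable (fun ω => exp (V ω)) P)
    (hY : AEMeasurable Y P) (hYB : ∀ᵐ ω ∂P, Y ω ∈ Set.Icc 0 B) :
    P[fun ω => exp (V ω + ((P[Y|m]) ω / 2 - Y ω) / B)|m] ≤ᵐ[P] fun ω => exp (V ω) := by
  have hsplit : (fun ω => exp (V ω + ((P[Y|m]) ω / 2 - Y ω) / B)) =
      (fun ω => exp (V ω + (P[Y|m]) ω / (2 * B))) * fun ω => exp (-(Y ω / B)) := by
    ext ω
    rw [Pi.mul_apply, ← exp_add]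
    congr 1
    field_simp
    ring
  have hint := integrable_exp_add_half_condExp_sub_div hm hB (hV.mono hm le_rfl).aemeasurable
    hVint hY hYB
  rw [hsplit] at hint ⊢
  have hEm : Measurable[m] (P[Y|m]) := stronglyMeasurable_condExp.measurable
  have hpull := condExp_mul_of_stronglyMeasurable_left (m := m)
    (f := fun ω => exp (V ω + (P[Y|m]) ω / (2 * B)))
    (Measurable.stronglyMeasurable (by fun_prop))
    hint (integrable_exp_neg_div hB.le hY (hYB.mono fun _ h => h.1))
  filter_upwards [hpull, condExp_exp_neg_div_le hm hB hY hYB] with ω hpull hle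
  rw [hpull, Pi.mul_apply]
  calc _ ≤ exp (V ω + (P[Y|m]) ω / (2 * B)) * exp (-((P[Y|m]) ω / (2 * B))) :=
        mul_le_mul_of_nonneg_left hle (exp_pos _).le
    _ = exp (V ω) := by rw [← exp_add, add_neg_cancel_right]

end CondExp

section Compensator

variable {Ω : Type*} {m0 : MeasurableSpace Ω} {P : Measure Ω} {F : Filtration ℕ m0}
  {X : ℕ → Ω → ℝ} {B : ℝ}

variable (P F X B) in
noncomputable def halfCompensatedSum (N : ℕ) (ω : Ω) : ℝ :=
  ∑ i ∈ Icc 1 N, ((P[X i|F (i - 1)]) ω / 2 - X i ω) / B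

lemma halfCompensatedSum_zero : halfCompensatedSum P F X B 0 = 0 := by
  ext ω
  simp [halfCompensatedSum]

lemma halfCompensatedSum_succ (N : ℕ) :
    halfCompensatedSum P F X B (N + 1) =
      fun ω => halfCompensatedSum P F X B N ω + ((P[X (N + 1)|F N]) ω / 2 - X (N + 1) ω) / B := by
  ext ω
  simp [halfCompensatedSum, sum_Icc_succ_top]

lemma adapted_halfCompensatedSum (hX : Adapted F X) :
    Adapted F (halfCompensatedSum P F X B) := by
  intro N
  refine Finset.measurable_fun_sum _ fun i hi => ?_
  have hiN := (mem_Icc.1 hi).2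
  have hE : Measurable[F N] (P[X i|F (i - 1)]) :=
    stronglyMeasurable_condExp.measurable.mono (F.mono (by omega)) le_rfl
  exact ((hE.div_const 2).sub ((hX i).mono (F.mono hiN) le_rfl)).div_const B

variable [IsFiniteMeasure P]

lemma integrable_exp_halfCompensatedSum (hB : 0 < B) (hX : Adapted F X)
    (hXB : ∀ i, ∀ᵐ ω ∂P, X i ω ∈ Set.Icc 0 B) (N : ℕ) :
    Integrable (fun ω => exp (halfCompensatedSum P F X B N ω)) P := by
  induction N with
  | zero => simp [halfCompensatedSum_zero]
  | succ N ih =>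
    rw [halfCompensatedSum_succ]
    exact integrable_exp_add_half_condExp_sub_div (F.le N) hB
      ((adapted_halfCompensatedSum hX N).mono (F.le N) le_rfl).aemeasurable ih
      ((hX (N + 1)).mono (F.le _) le_rfl).aemeasurable (hXB _)

lemma supermartingale_exp_halfCompensatedSum (hB : 0 < B) (hX : Adapted F X)
    (hXB : ∀ i, ∀ᵐ ω ∂P, X i ω ∈ Set.Icc 0 B) :
    Supermartingale (fun N ω => exp (halfCompensatedSum P F X B N ω)) F P := by
  refine supermartingale_nat
    (fun N => (measurable_exp.comp (adapted_halfCompensatedSum hX N)).stronglyMeasurable)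
    (integrable_exp_halfCompensatedSum hB hX hXB) fun N => ?_
  rw [halfCompensatedSum_succ]
  exact condExp_exp_add_half_condExp_sub_div_le (F.le N) hB (adapted_halfCompensatedSum hX N)
    (integrable_exp_halfCompensatedSum hB hX hXB N)
    ((hX (N + 1)).mono (F.le _) le_rfl).aemeasurable (hXB _)

lemma integral_exp_halfCompensatedSum_le_one [IsProbabilityMeasure P] (hB : 0 < B)
    (hX : Adapted F X) (hXB : ∀ i, ∀ᵐ ω ∂P, X i ω ∈ Set.Icc 0 B) (N : ℕ) :
    ∫ ω, exp (halfCompensatedSum P F X B N ω) ∂P ≤ 1 := by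
  simpa [halfCompensatedSum_zero] using
    (supermartingale_exp_halfCompensatedSum hB hX hXB).setIntegral_le (Nat.zero_le N)
      MeasurableSet.univ

end Compensator

section UnionBound

variable {Ω : Type*} {m0 : MeasurableSpace Ω} {P : Measure Ω}

lemma measure_lt_le_exp_neg_of_integral_exp_le_one [IsFiniteMeasure P] {S : Ω → ℝ}
    (hS : Integrable (fun ω => exp (S ω)) P) (hS1 : ∫ ω, exp (S ω) ∂P ≤ 1) (t : ℝ) :
    P {ω | t < S ω} ≤ ENNReal.ofReal (exp (-t)) := by
  have hmarkov := mul_meas_ge_le_integral_of_nonneg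
    (ae_of_all _ fun ω => (exp_pos (S ω)).le) hS (exp t)
  have hreal : P.real {ω | exp t ≤ exp (S ω)} ≤ exp (-t) := by
    rw [exp_neg, ← one_div, le_div_iff₀ (exp_pos t)]
    linarith
  calc P {ω | t < S ω} ≤ P {ω | exp t ≤ exp (S ω)} :=
        measure_mono fun ω h => exp_le_exp.2 (le_of_lt h)
    _ = ENNReal.ofReal (P.real {ω | exp t ≤ exp (S ω)}) := (ofReal_measureReal).symm
    _ ≤ ENNReal.ofReal (exp (-t)) := ENNReal.ofReal_le_ofReal hreal

lemma ofReal_one_sub_le_measure_forall [IsProbabilityMeasure P] {p : ℕ → Ω → Prop} {δ : ℝ}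
    (hδ : 0 ≤ δ) (hp : ∀ N : ℕ, 1 ≤ N → P {ω | ¬ p N ω} ≤ ENNReal.ofReal (δ / 4 * (1 / N ^ 2))) :
    ENNReal.ofReal (1 - δ) ≤ P {ω | ∀ N : ℕ, 1 ≤ N → p N ω} := by
  set bad := ⋃ N : ℕ, {ω | 1 ≤ N ∧ ¬ p N ω}
  have hbad : P bad ≤ ENNReal.ofReal δ := calc
    P bad ≤ ∑' N : ℕ, P {ω | 1 ≤ N ∧ ¬ p N ω} := measure_iUnion_le _
    _ ≤ ∑' N : ℕ, ENNReal.ofReal (δ / 4 * (1 / N ^ 2)) := by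
      refine ENNReal.tsum_le_tsum fun N => ?_
      rcases Nat.eq_zero_or_pos N with rfl | hN
      · simp
      · exact (measure_mono fun ω h => h.2).trans (hp N hN)
    _ = ENNReal.ofReal (∑' N : ℕ, δ / 4 * (1 / N ^ 2)) :=
      (ENNReal.ofReal_tsum_of_nonneg (fun N => by positivity)
        ((summable_one_div_nat_pow.2 one_lt_two).mul_left _)).symm
    _ ≤ ENNReal.ofReal δ := by
      refine ENNReal.ofReal_le_ofReal ?_
      rw [tsum_mul_left, hasSum_zeta_two.tsum_eq]
      have hpi : π ^ 2 / 6 ≤ 4 := by nlinarith [pi_lt_four, pi_pos]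
      nlinarith [mul_le_mul_of_nonneg_left hpi (by positivity : 0 ≤ δ / 4)]
  have hgood : {ω | ∀ N : ℕ, 1 ≤ N → p N ω} = badᶜ := by
    ext ω
    simp [bad]
  have hsplit : 1 ≤ P bad + P badᶜ := by
    rw [← measure_univ (μ := P), ← Set.union_compl_self bad]
    exact measure_union_le _ _
  rw [hgood, ENNReal.ofReal_sub _ hδ, ENNReal.ofReal_one, tsub_le_iff_right]
  calc 1 ≤ P bad + P badᶜ := hsplit
    _ ≤ ENNReal.ofReal δ + P badᶜ := by gcongr
    _ = P badᶜ + ENNReal.ofReal δ := add_comm _ _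

lemma exp_neg_two_mul_log_le {N δ : ℝ} (hN : 1 ≤ N) (hδ : δ ∈ Set.Ioo (0 : ℝ) 1) :
    exp (-(2 * log (2 * N / δ))) ≤ δ / 4 * (1 / N ^ 2) := by
  have hx : 0 < 2 * N / δ := by have := hδ.1; positivity
  have hlog : 2 * log (2 * N / δ) = log ((2 * N / δ) ^ 2) := by
    rw [log_pow]
    norm_num
  rw [exp_neg, hlog, exp_log (pow_pos hx 2), div_pow, inv_div]
  have hN0 : 0 < N := by linarith
  rw [div_le_iff₀ (by positivity)]
  field_simp
  nlinarith [hδ.1, hδ.2]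

end UnionBound

/-- Martingale concentration: for an adapted sequence of `[0,B]`-valued random variables,
with probability at least `1 - δ`, for every `N ≥ 1`,
`∑_{i=1}^N E[Xᵢ | F_{i-1}] ≤ 2 ∑_{i=1}^N Xᵢ + 4 B log (2N/δ)`. -/
theorem stmt_16 {Ω : Type*} {m0 : MeasurableSpace Ω} (P : Measure Ω) [IsProbabilityMeasure P]
    (F : Filtration ℕ m0) (X : ℕ → Ω → ℝ) (B δ : ℝ) (hB : 0 < B)
    (hδ : δ ∈ Set.Ioo (0 : ℝ) 1)
    (hadapted : Adapted F X)
    (hbound : ∀ i, ∀ᵐ ω ∂P, X i ω ∈ Set.Icc 0 B) :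
    ENNReal.ofReal (1 - δ) ≤
      P {ω | ∀ N : ℕ, 1 ≤ N →
        ∑ i ∈ Finset.Icc 1 N, (P[X i | F (i - 1)]) ω ≤
          2 * ∑ i ∈ Finset.Icc 1 N, X i ω + 4 * B * Real.log (2 * N / δ)} := by
  refine ofReal_one_sub_le_measure_forall hδ.1.le fun N hN => ?_
  set L := log (2 * N / δ)
  have hbad : {ω | ¬ (∑ i ∈ Icc 1 N, (P[X i | F (i - 1)]) ω ≤
      2 * ∑ i ∈ Icc 1 N, X i ω + 4 * B * L)} ⊆ {ω | 2 * L < halfCompensatedSum P F X B N ω} := by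
    intro ω hω
    simp only [Set.mem_ofPred_eq, not_le, halfCompensatedSum, ← sum_div, sum_sub_distrib] at hω ⊢
    rw [lt_div_iff₀ hB]
    linarith
  calc _ ≤ _ := measure_mono hbad
    _ ≤ ENNReal.ofReal (exp (-(2 * L))) :=
      measure_lt_le_exp_neg_of_integral_exp_le_one
        (integrable_exp_halfCompensatedSum hB hadapted hbound N)
        (integral_exp_halfCompensatedSum_le_one hB hadapted hbound N) _
    _ ≤ _ := ENNReal.ofReal_le_ofReal (exp_neg_two_mul_log_le (by exact_mod_cast hN) hδ)
end
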